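/- arXiv:1705.03936 — 8 statements merged into one kernel-verified Lean document; each statement's English description precedes it below -/
import Mathlib

section
/- Let (w_i)_{i=1}^∞ be a non-increasing sequence of non-negative reals such that w_i → 0 and ∑_{i=1}^∞ w_i = ∞. Then for every constant C < ∞ there exists a non-increasing sequence (a_i)_{i=1}^∞ of non-negative reals such that ∑_{i=1}^∞ a_i w_i > C · sup_{n∈ℕ} ∑_{i=1}^n a_i w_{1+n-i}. -/
/-!
Take scales `M 0 ≤ M 1 ≤ ⋯` and the non-increasing step function
`a = ∑_{j < K} S(M j)⁻¹ · 1_{[0, M j)}`, where `S m = ∑_{i < m} w i`. Each scale contributes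
exactly `1` to `∑ a i * w i`, which is therefore `K`. To the convolution at `n` the `j`-th scale
contributes `S(M j)⁻¹ ∑_{i < min n (M j)} w (n - 1 - i) ≤ 1`, and at most `K⁻¹` unless
`M (j - 1) < n < M (j + 1)`: if `n ≤ M (j - 1)` it is at most `S(M (j - 1)) / S(M j)`, small
because the partial sums grow by the factor `K` from one scale to the next, and if
`M (j + 1) ≤ n` it is at most `M j * w (M (j + 1) - M j) / S(M j)`, small because `w → 0`.
So every convolution is at most `3`, while the diagonal sum is `K > 3 C`.
-/

open scoped NNReal ENNReal
open Finset Filter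

theorem Finset.card_le_two_of_forall_le_add_one {s : Finset ℕ}
    (h : ∀ a ∈ s, ∀ b ∈ s, a ≤ b + 1) : #s ≤ 2 := by
  rcases s.eq_empty_or_nonempty with rfl | hs
  · simp
  have hsub : s ⊆ Icc (s.min' hs) (s.min' hs + 1) := fun a ha =>
    mem_Icc.2 ⟨s.min'_le a ha, h a ha _ (s.min'_mem hs)⟩
  have := card_le_card hsub
  rw [Nat.card_Icc] at this
  omega

theorem Finset.sum_range_mul_sum_ite_lt {R : Type*} [NonUnitalNonAssocSemiring R] {ι : Type*}
    (s : Finset ι) (M : ι → ℕ) (c : ι → R) (b : ℕ → R) (n : ℕ) :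
    ∑ i ∈ range n, (∑ j ∈ s, if i < M j then c j else 0) * b i
      = ∑ j ∈ s, c j * ∑ i ∈ range (min n (M j)), b i := by
  have hlt : ∀ m, (range n).filter (· < m) = range (min n m) := fun m => by
    ext i; simp only [mem_filter, mem_range]; omega
  simp_rw [sum_mul, ite_mul, zero_mul]
  rw [sum_comm]
  simp_rw [← sum_filter, hlt, mul_sum]

theorem inv_mul_le_inv_of_mul_le {α : Type*} [Semifield α] [LinearOrder α] [IsStrictOrderedRing α]
    {K S x : α} (hK : 0 < K) (hS : 0 < S) (h : K * x ≤ S) : S⁻¹ * x ≤ K⁻¹ := by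
  rw [inv_mul_le_iff₀ hS, le_mul_inv_iff₀ hK, mul_comm]
  exact h

namespace DivergentWeight

variable {w : ℕ → ℝ≥0}

def partialSum (w : ℕ → ℝ≥0) (n : ℕ) : ℝ≥0 := ∑ i ∈ range n, w i

theorem partialSum_mono (w : ℕ → ℝ≥0) : Monotone (partialSum w) := fun _ _ h =>
  sum_le_sum_of_subset (range_subset_range.2 h)

theorem tendsto_partialSum_atTop (hdiv : ∑' i, (w i : ℝ≥0∞) = ⊤) :
    Tendsto (partialSum w) atTop atTop :=
  NNReal.not_summable_iff_tendsto_nat_atTop.1 fun hs =>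
    ENNReal.tsum_coe_ne_top_iff_summable.2 hs hdiv

theorem partialSum_pos (hw : Antitone w) (hdiv : ∑' i, (w i : ℝ≥0∞) = ⊤) {n : ℕ}
    (hn : 0 < n) : 0 < partialSum w n := by
  have hw0 : w 0 ≠ 0 := fun h0 => by
    have hzero : w = 0 := funext fun i => le_antisymm ((hw i.zero_le).trans h0.le) zero_le
    simp [hzero] at hdiv
  exact (pos_iff_ne_zero.2 hw0).trans_le
    (single_le_sum (fun i _ => zero_le) (mem_range.2 hn))

theorem sum_range_sub_le_partialSum (hw : Antitone w) {m n : ℕ} (hmn : m ≤ n) :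
    ∑ i ∈ range m, w (n - 1 - i) ≤ partialSum w m := by
  rw [partialSum, ← sum_range_reflect]
  exact sum_le_sum fun i hi => hw (by simp at hi; omega)

theorem sum_range_sub_le_mul (hw : Antitone w) (m n : ℕ) :
    ∑ i ∈ range m, w (n - 1 - i) ≤ m * w (n - m) := by
  simpa using sum_le_card_nsmul (range m) _ _ fun i hi => hw (by simp at hi; omega)

structure IsSparseScales (w : ℕ → ℝ≥0) (K : ℝ≥0) (M : ℕ → ℕ) : Prop where
  mono : Monotone M
  partialSum_pos : ∀ j, 0 < partialSum w (M j)
  growth : ∀ j, K * partialSum w (M j) ≤ partialSum w (M (j + 1))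
  gap : ∀ j, K * M j * w (M (j + 1) - M j) ≤ partialSum w (M j)

theorem exists_isSparseScales (hw : Antitone w) (h0 : Tendsto w atTop (nhds 0))
    (hdiv : ∑' i, (w i : ℝ≥0∞) = ⊤) (K : ℝ≥0) : ∃ M, IsSparseScales w K M := by
  have step : ∀ m, 0 < m → ∀ᶠ m' in atTop, m ≤ m' ∧
      K * partialSum w m ≤ partialSum w m' ∧ K * m * w (m' - m) ≤ partialSum w m := by
    intro m hm
    have hgap : Tendsto (fun m' => K * m * w (m' - m)) atTop (nhds 0) := by
      simpa using (h0.comp (tendsto_sub_atTop_nat m)).const_mul (K * m)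
    exact (eventually_ge_atTop m).and <|
      ((tendsto_partialSum_atTop hdiv).eventually_ge_atTop _).and <|
        (hgap.eventually_le_const (partialSum_pos hw hdiv hm))
  choose! next hnext using fun m hm => (step m hm).exists
  have hM : ∀ j, 0 < next^[j] 1 ∧ next^[j] 1 ≤ next^[j + 1] 1 := by
    intro j
    induction j with
    | zero => exact ⟨one_pos, (hnext 1 one_pos).1⟩
    | succ j ih =>
      have hpos := ih.1.trans_le ih.2
      rw [Function.iterate_succ_apply' next (j + 1)]
      exact ⟨hpos, (hnext _ hpos).1⟩
  refine ⟨fun j => next^[j] 1, monotone_nat_of_le_succ fun j => (hM j).2,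
    fun j => partialSum_pos hw hdiv (hM j).1, fun j => ?_, fun j => ?_⟩
  · simp only [Function.iterate_succ_apply']
    exact (hnext _ (hM j).1).2.1
  · simp only [Function.iterate_succ_apply']
    exact (hnext _ (hM j).1).2.2

noncomputable def stepSeq (w : ℕ → ℝ≥0) (M : ℕ → ℕ) (K i : ℕ) : ℝ≥0 :=
  ∑ j ∈ range K, if i < M j then (partialSum w (M j))⁻¹ else 0

theorem antitone_stepSeq (w : ℕ → ℝ≥0) (M : ℕ → ℕ) (K : ℕ) : Antitone (stepSeq w M K) :=
  fun _ _ hii' => sum_le_sum fun _ _ => by split_ifs <;> first | rfl | exact zero_le | omega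

theorem sum_stepSeq_mul_self {M : ℕ → ℕ} (hmono : Monotone M)
    (hpos : ∀ j, 0 < partialSum w (M j)) (K : ℕ) :
    ∑ i ∈ range (M K), stepSeq w M K i * w i = K := by
  simp only [stepSeq]
  rw [sum_range_mul_sum_ite_lt]
  calc ∑ j ∈ range K, (partialSum w (M j))⁻¹ * ∑ i ∈ range (min (M K) (M j)), w i
      = ∑ j ∈ range K, 1 := sum_congr rfl fun j hj => by
        rw [min_eq_right (hmono (mem_range.1 hj).le)]
        exact inv_mul_cancel₀ (hpos j).ne'
    _ = K := by simp

theorem scale_contribution_le {K : ℝ≥0} {M : ℕ → ℕ} (hw : Antitone w)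
    (hM : IsSparseScales w K M) (hK : 0 < K) (j n : ℕ) :
    (partialSum w (M j))⁻¹ * ∑ i ∈ range (min n (M j)), w (n - 1 - i)
      ≤ K⁻¹ + if n < M (j + 1) ∧ (j = 0 ∨ M (j - 1) < n) then 1 else 0 := by
  have hS := hM.partialSum_pos j
  have hle_partialSum : ∑ i ∈ range (min n (M j)), w (n - 1 - i) ≤ partialSum w (min n (M j)) :=
    sum_range_sub_le_partialSum hw (min_le_left _ _)
  split_ifs with hbad
  · calc _ ≤ (partialSum w (M j))⁻¹ * partialSum w (M j) := by
          gcongr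
          exact hle_partialSum.trans (partialSum_mono w (min_le_right _ _))
      _ = 1 := inv_mul_cancel₀ hS.ne'
      _ ≤ K⁻¹ + 1 := le_add_self
  rw [add_zero]
  by_cases hfar : M (j + 1) ≤ n
  · refine inv_mul_le_inv_of_mul_le hK hS (le_trans ?_ (hM.gap j))
    calc K * ∑ i ∈ range (min n (M j)), w (n - 1 - i)
        ≤ K * (min n (M j) * w (n - min n (M j))) := by
          gcongr; exact sum_range_sub_le_mul hw _ n
      _ ≤ K * M j * w (M (j + 1) - M j) := by
          rw [mul_assoc]
          gcongr
          · exact min_le_right _ _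
          · exact hw (by omega)
  · obtain ⟨hj, hn⟩ : j ≠ 0 ∧ n ≤ M (j - 1) := by omega
    obtain ⟨j, rfl⟩ := Nat.exists_eq_succ_of_ne_zero hj
    rw [Nat.succ_sub_one] at hn
    refine inv_mul_le_inv_of_mul_le hK hS (le_trans ?_ (hM.growth j))
    gcongr
    exact hle_partialSum.trans (partialSum_mono w (by omega))

theorem sum_stepSeq_mul_sub_le_three {K : ℕ} {M : ℕ → ℕ} (hw : Antitone w)
    (hM : IsSparseScales w K M) (hK : 0 < K) (n : ℕ) :
    ∑ i ∈ range n, stepSeq w M K i * w (n - 1 - i) ≤ 3 := by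
  set bad := (range K).filter fun j => n < M (j + 1) ∧ (j = 0 ∨ M (j - 1) < n)
  have hbad : #bad ≤ 2 := by
    refine card_le_two_of_forall_le_add_one fun a ha b hb => ?_
    simp only [bad, mem_filter] at ha hb
    by_contra! hab
    have := hM.mono (show b + 1 ≤ a - 1 by omega)
    omega
  simp only [stepSeq]
  rw [sum_range_mul_sum_ite_lt (b := fun i => w (n - 1 - i))]
  calc _ ≤ ∑ j ∈ range K, ((K : ℝ≥0)⁻¹
          + if n < M (j + 1) ∧ (j = 0 ∨ M (j - 1) < n) then 1 else 0) :=
        sum_le_sum fun j _ => scale_contribution_le hw hM (by exact_mod_cast hK) j n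
    _ = 1 + #bad := by
        rw [sum_add_distrib, sum_const, card_range, nsmul_eq_mul,
          mul_inv_cancel₀ (by exact_mod_cast hK.ne'), sum_boole]
    _ ≤ 3 := by
        have : (#bad : ℝ≥0) ≤ 2 := by exact_mod_cast hbad
        linear_combination this

end DivergentWeight

open DivergentWeight

/-- If `(w_i)` is non-increasing, tends to `0` and `∑ w_i = ∞`, then for every
`C < ∞` there exists a non-increasing sequence `(a_i)` of non-negative reals with
`∑ a_i w_i > C · sup_n ∑_{i=1}^n a_i w_{1+n-i}`. -/
theorem stmt_4 (w : ℕ → ℝ≥0) (hw : Antitone w)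
    (h0 : Filter.Tendsto w Filter.atTop (nhds 0))
    (hdiv : ∑' i : ℕ, (w i : ℝ≥0∞) = ⊤) :
    ∀ C : ℝ≥0∞, C < ⊤ → ∃ a : ℕ → ℝ≥0, Antitone a ∧
      C * (⨆ n : ℕ, ∑ i ∈ Finset.range n, ((a i * w (n - 1 - i) : ℝ≥0) : ℝ≥0∞))
        < ∑' i : ℕ, ((a i * w i : ℝ≥0) : ℝ≥0∞) := by
  intro C hC
  obtain ⟨K, hK⟩ := ENNReal.exists_nat_gt (ENNReal.mul_ne_top (a := 3) (by simp) hC.ne)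
  have hKpos : 0 < K := Nat.pos_of_ne_zero (by rintro rfl; simp at hK)
  obtain ⟨M, hM⟩ := exists_isSparseScales hw h0 hdiv K
  refine ⟨stepSeq w M K, antitone_stepSeq w M K, ?_⟩
  calc C * ⨆ n, ∑ i ∈ range n, ((stepSeq w M K i * w (n - 1 - i) : ℝ≥0) : ℝ≥0∞)
      ≤ C * 3 := by
        gcongr
        refine iSup_le fun n => ?_
        rw [← ENNReal.ofNNReal_finsetSum]
        exact_mod_cast sum_stepSeq_mul_sub_le_three hw hM hKpos n
    _ < K := by rwa [mul_comm]
    _ = ∑ i ∈ range (M K), ((stepSeq w M K i * w i : ℝ≥0) : ℝ≥0∞) := by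
        rw [← ENNReal.ofNNReal_finsetSum, sum_stepSeq_mul_self hM.mono hM.partialSum_pos]
        simp
    _ ≤ _ := ENNReal.sum_le_tsum _
end

section
/- Let (w_i)_{i=1}^∞ be a non-increasing sequence of non-negative reals. The following are equivalent: (i) there exists a constant C < ∞ such that ∑_{i=1}^∞ a_i w_i ≤ C · sup_{n∈ℕ} ∑_{i=1}^n a_i w_{1+n-i} for every non-increasing sequence (a_i)_{i=1}^∞ of non-negative reals; (ii) either ∑_{i=1}^∞ w_i < ∞ or inf_{i∈ℕ} w_i > 0. -/
open scoped NNReal ENNReal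

/-!
Sufficiency is direct. For summable `w`, `∑ aᵢwᵢ ≤ a₀ ∑ wᵢ`, and `a₀w₀` is the first reversed
sum; if `inf w > 0`, then `∑ aᵢwᵢ ≤ w₀ ∑ aᵢ`, while the `n`-th reversed sum is at least
`(inf w) ∑_{i<n} aᵢ`.

For necessity, `W n = w₀ + ⋯ + w_{n-1}` is unbounded and `w → 0`, so there are block endpoints
`N₀ < N₁ < ⋯` along which `W` at least doubles and `N_k w(N_{k+1} - N_k) ≤ 2^{-(k+1)} W(N_k)`.
The sum `a` of the normalised indicators `1_{[0, N_k)} / W(N_k)`, `k < m`, is non-increasing with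
`∑ aᵢwᵢ = m`, while every reversed sum of `a` is at most `4`: the blocks ending well before `n`
contribute at most `1` in total, the block containing `n` at most `1`, and the blocks ending after
`n` at most `2`, by the doubling of `W`.
-/

open Finset Filter Topology

namespace AntitoneWeight

noncomputable def reversedSum (a w : ℕ → ℝ≥0) (n : ℕ) : ℝ≥0∞ :=
  ∑ i ∈ range n, ((a i * w (n - 1 - i) : ℝ≥0) : ℝ≥0∞)

def ReversedSumBounded (w : ℕ → ℝ≥0) : Prop :=
  ∃ C : ℝ≥0, ∀ a : ℕ → ℝ≥0, Antitone a →
    ∑' i, ((a i * w i : ℝ≥0) : ℝ≥0∞) ≤ C * ⨆ n, reversedSum a w n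

variable {w : ℕ → ℝ≥0}

lemma tsum_coe_mul_le {a : ℕ → ℝ≥0} {c : ℝ≥0} (h : ∀ i, a i ≤ c) (w : ℕ → ℝ≥0) :
    ∑' i, ((a i * w i : ℝ≥0) : ℝ≥0∞) ≤ c * ∑' i, (w i : ℝ≥0∞) := by
  rw [← ENNReal.tsum_mul_left]
  refine ENNReal.tsum_le_tsum fun i => ?_
  push_cast
  gcongr
  exact h i

lemma coe_mul_le_iSup_reversedSum (a w : ℕ → ℝ≥0) :
    ((a 0 * w 0 : ℝ≥0) : ℝ≥0∞) ≤ ⨆ n, reversedSum a w n :=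
  le_iSup_of_le 1 (by simp [reversedSum])

lemma iInf_mul_tsum_le_iSup_reversedSum (a w : ℕ → ℝ≥0) :
    ((⨅ i, w i : ℝ≥0) : ℝ≥0∞) * ∑' i, (a i : ℝ≥0∞) ≤ ⨆ n, reversedSum a w n := by
  rw [ENNReal.tsum_eq_iSup_nat, ENNReal.mul_iSup]
  refine iSup_mono fun n => ?_
  rw [mul_sum]
  refine sum_le_sum fun i _ => ?_
  push_cast
  rw [mul_comm]
  gcongr
  exact ciInf_le (OrderBot.bddBelow _) _

theorem reversedSumBounded_of_tsum_ne_top (hw : Antitone w)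
    (h : ∑' i, (w i : ℝ≥0∞) ≠ ⊤) : ReversedSumBounded w := by
  rcases eq_or_ne (w 0) 0 with h0 | h0
  · have hw0 : ∀ i, w i = 0 := fun i => le_antisymm (h0 ▸ hw i.zero_le) bot_le
    exact ⟨0, fun a _ => by simp [hw0]⟩
  · refine ⟨(∑' i, (w i : ℝ≥0∞)).toNNReal / w 0, fun a ha => ?_⟩
    calc ∑' i, ((a i * w i : ℝ≥0) : ℝ≥0∞) ≤ a 0 * ∑' i, (w i : ℝ≥0∞) :=
          tsum_coe_mul_le (fun i => ha i.zero_le) w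
      _ = ((∑' i, (w i : ℝ≥0∞)).toNNReal / w 0 : ℝ≥0) * ((a 0 * w 0 : ℝ≥0) : ℝ≥0∞) := by
          rw [← ENNReal.coe_toNNReal h, ← ENNReal.coe_mul, ← ENNReal.coe_mul,
            ENNReal.toNNReal_coe]
          congr 1
          field_simp
      _ ≤ _ := by gcongr; exact coe_mul_le_iSup_reversedSum a w

theorem reversedSumBounded_of_iInf_pos (hw : Antitone w) (h : 0 < ⨅ i, w i) :
    ReversedSumBounded w := by
  refine ⟨w 0 / ⨅ i, w i, fun a _ => ?_⟩
  calc ∑' i, ((a i * w i : ℝ≥0) : ℝ≥0∞) ≤ w 0 * ∑' i, (a i : ℝ≥0∞) := by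
        simpa only [mul_comm] using tsum_coe_mul_le (fun i => hw i.zero_le) a
    _ = (w 0 / ⨅ i, w i : ℝ≥0) * (((⨅ i, w i : ℝ≥0) : ℝ≥0∞) * ∑' i, (a i : ℝ≥0∞)) := by
        rw [← mul_assoc, ← ENNReal.coe_mul, div_mul_cancel₀ _ h.ne']
    _ ≤ _ := by gcongr; exact iInf_mul_tsum_le_iSup_reversedSum a w

lemma reversedSum_finset_sum {ι : Type*} (s : Finset ι) (f : ι → ℕ → ℝ≥0) (w : ℕ → ℝ≥0)
    (n : ℕ) : reversedSum (∑ k ∈ s, f k) w n = ∑ k ∈ s, reversedSum (f k) w n := by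
  simp only [reversedSum, Finset.sum_apply, sum_mul, ENNReal.ofNNReal_finsetSum]
  exact sum_comm

lemma tsum_finset_sum_mul {ι : Type*} (s : Finset ι) (f : ι → ℕ → ℝ≥0) (w : ℕ → ℝ≥0) :
    ∑' i, (((∑ k ∈ s, f k) i * w i : ℝ≥0) : ℝ≥0∞)
      = ∑ k ∈ s, ∑' i, ((f k i * w i : ℝ≥0) : ℝ≥0∞) := by
  simp only [Finset.sum_apply, sum_mul, ENNReal.ofNNReal_finsetSum]
  exact Summable.tsum_finsetSum fun _ _ => ENNReal.summable

noncomputable def partialSum (w : ℕ → ℝ≥0) (n : ℕ) : ℝ≥0 := ∑ j ∈ range n, w j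

lemma partialSum_mono (w : ℕ → ℝ≥0) : Monotone (partialSum w) := fun _ _ h =>
  sum_le_sum_of_subset (range_subset_range.2 h)

lemma sum_range_sub_le_partialSum (hw : Antitone w) {L n : ℕ} (h : L ≤ n) :
    ∑ i ∈ range L, w (n - 1 - i) ≤ partialSum w L :=
  calc ∑ i ∈ range L, w (n - 1 - i) ≤ ∑ i ∈ range L, w (L - 1 - i) :=
        sum_le_sum fun i hi => hw (by simp at hi; omega)
    _ = partialSum w L := sum_range_reflect w L

lemma sum_range_min_sub_le (hw : Antitone w) (n N : ℕ) :
    ∑ i ∈ range (min n N), w (n - 1 - i) ≤ N * w (n - N) :=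
  calc ∑ i ∈ range (min n N), w (n - 1 - i) ≤ (range (min n N)).card • w (n - N) :=
        sum_le_card_nsmul _ _ _ fun i hi => hw (by simp at hi; omega)
    _ ≤ N * w (n - N) := by
        rw [card_range, nsmul_eq_mul]
        gcongr
        exact_mod_cast min_le_right n N

noncomputable def block (w : ℕ → ℝ≥0) (N i : ℕ) : ℝ≥0 :=
  if i < N then (partialSum w N)⁻¹ else 0

lemma block_antitone (w : ℕ → ℝ≥0) (N : ℕ) : Antitone (block w N) := fun i j hij => by
  unfold block
  split_ifs <;> first | exact le_rfl | exact bot_le | omega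

lemma tsum_block_mul {N : ℕ} (hN : partialSum w N ≠ 0) :
    ∑' i, ((block w N i * w i : ℝ≥0) : ℝ≥0∞) = 1 := by
  rw [tsum_eq_sum (s := range N) fun i hi => by simp_all [block]]
  rw [← ENNReal.ofNNReal_finsetSum, ← ENNReal.coe_one]
  congr 1
  rw [sum_congr rfl fun i hi => by rw [block, if_pos (mem_range.1 hi)], ← mul_sum]
  exact inv_mul_cancel₀ hN

lemma reversedSum_block (w : ℕ → ℝ≥0) (N n : ℕ) :
    reversedSum (block w N) w n
      = ((∑ i ∈ range (min n N), w (n - 1 - i)) / partialSum w N : ℝ≥0) := by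
  have hfilter : (range n).filter (· < N) = range (min n N) := by ext; simp
  simp only [reversedSum, block, ite_mul, zero_mul]
  rw [← ENNReal.ofNNReal_finsetSum, ← sum_filter, hfilter, ← mul_sum, inv_mul_eq_div]

lemma reversedSum_block_le_div (hw : Antitone w) (N n : ℕ) :
    reversedSum (block w N) w n ≤ (partialSum w (min n N) / partialSum w N : ℝ≥0) := by
  rw [reversedSum_block]
  gcongr
  exact sum_range_sub_le_partialSum hw (min_le_left n N)

lemma reversedSum_block_le_one (hw : Antitone w) (N n : ℕ) :
    reversedSum (block w N) w n ≤ 1 := by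
  refine (reversedSum_block_le_div hw N n).trans ?_
  exact_mod_cast div_le_one_of_le₀ (partialSum_mono w (min_le_right n N)) bot_le

lemma reversedSum_block_le_mul_div (hw : Antitone w) (N n : ℕ) :
    reversedSum (block w N) w n ≤ (N * w (n - N) / partialSum w N : ℝ≥0) := by
  rw [reversedSum_block]
  gcongr
  exact sum_range_min_sub_le hw n N

lemma sum_range_le_four (b : ℕ → ℝ≥0∞) (K m : ℕ) (hlt : ∀ k, k + 1 < K → b k ≤ 2⁻¹ ^ (k + 1))
    (hle : ∀ k, b k ≤ 1) (hge : ∀ k, K ≤ k → b k ≤ 2⁻¹ ^ (k - K)) :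
    ∑ k ∈ range m, b k ≤ 4 := by
  have hhead : ∑ k ∈ range K, b k ≤ 2 := by
    rcases K with _ | K
    · simp
    calc ∑ k ∈ range (K + 1), b k = ∑ k ∈ range K, b k + b K := sum_range_succ b K
      _ ≤ ∑' k, (2⁻¹ : ℝ≥0∞) ^ (k + 1) + 1 := by
          gcongr
          · exact (sum_le_sum fun k hk => hlt k (by simp at hk; omega)).trans
              (ENNReal.sum_le_tsum _)
          · exact hle K
      _ = 2 := by rw [ENNReal.tsum_geometric_add_one, ENNReal.one_sub_inv_two, inv_inv,
            ENNReal.inv_mul_cancel two_ne_zero ENNReal.ofNat_ne_top, one_add_one_eq_two]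
  have htail : ∑' j, b (j + K) ≤ 2 :=
    calc ∑' j, b (j + K) ≤ ∑' j, (2⁻¹ : ℝ≥0∞) ^ j :=
          ENNReal.tsum_le_tsum fun j => by simpa using hge (j + K) (by omega)
      _ = 2 := ENNReal.tsum_geometric_two
  calc ∑ k ∈ range m, b k ≤ ∑' k, b k := ENNReal.sum_le_tsum _
    _ = ∑ k ∈ range K, b k + ∑' j, b (j + K) :=
        ENNReal.summable.sum_add_tsum_nat_add'.symm
    _ ≤ 2 + 2 := add_le_add hhead htail
    _ = 4 := by norm_num

structure IsBlockSeq (w : ℕ → ℝ≥0) (N : ℕ → ℕ) : Prop where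
  partialSum_pos : 0 < partialSum w (N 0)
  two_mul_le : ∀ k, 2 * partialSum w (N k) ≤ partialSum w (N (k + 1))
  mul_le : ∀ k, N k * w (N (k + 1) - N k) ≤ 2⁻¹ ^ (k + 1) * partialSum w (N k)

namespace IsBlockSeq

variable {N : ℕ → ℕ}

lemma pow_mul_le (hN : IsBlockSeq w N) (j k : ℕ) :
    2 ^ j * partialSum w (N k) ≤ partialSum w (N (k + j)) := by
  induction j with
  | zero => simp
  | succ j ih =>
      calc 2 ^ (j + 1) * partialSum w (N k) = 2 * (2 ^ j * partialSum w (N k)) := by ring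
        _ ≤ 2 * partialSum w (N (k + j)) := by gcongr
        _ ≤ partialSum w (N (k + (j + 1))) := hN.two_mul_le (k + j)

lemma partialSum_pos_apply (hN : IsBlockSeq w N) (k : ℕ) : 0 < partialSum w (N k) := by
  have h := hN.pow_mul_le k 0
  rw [zero_add] at h
  exact (mul_pos (pow_pos two_pos k) hN.partialSum_pos).trans_le h

lemma strictMono (hN : IsBlockSeq w N) : StrictMono N := by
  refine strictMono_nat_of_lt_succ fun k => ?_
  by_contra! hle
  have hpos := hN.partialSum_pos_apply k
  have := (hN.two_mul_le k).trans (partialSum_mono w hle)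
  rw [two_mul] at this
  exact (lt_add_of_pos_right _ hpos).not_ge this

lemma partialSum_le_pow_mul (hN : IsBlockSeq w N) {K k : ℕ} (h : K ≤ k) :
    partialSum w (N K) ≤ 2⁻¹ ^ (k - K) * partialSum w (N k) := by
  have := hN.pow_mul_le (k - K) K
  rw [Nat.add_sub_cancel' h] at this
  rw [← div_le_iff₀' (by positivity), div_eq_mul_inv, inv_pow, inv_inv, mul_comm]
  exact this

lemma sum_reversedSum_block_le (hw : Antitone w) (hN : IsBlockSeq w N) (m n : ℕ) :
    ∑ k ∈ range m, reversedSum (block w (N k)) w n ≤ 4 := by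
  have hex : ∃ K, n < N K := ⟨n + 1, (Nat.lt_succ_self n).trans_le hN.strictMono.le_apply⟩
  set K := Nat.find hex
  refine sum_range_le_four _ K m (fun k hk => ?_) (fun k => reversedSum_block_le_one hw _ n)
    (fun k hk => ?_)
  · have hnk : N (k + 1) ≤ n := not_lt.1 (Nat.find_min hex hk)
    refine (reversedSum_block_le_mul_div hw (N k) n).trans ?_
    rw [← ENNReal.coe_inv_two, ← ENNReal.coe_pow, ENNReal.coe_le_coe,
      div_le_iff₀ (hN.partialSum_pos_apply k)]
    calc (N k : ℝ≥0) * w (n - N k) ≤ N k * w (N (k + 1) - N k) := by gcongr; exact hw (by omega)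
      _ ≤ _ := hN.mul_le k
  · refine (reversedSum_block_le_div hw (N k) n).trans ?_
    rw [← ENNReal.coe_inv_two, ← ENNReal.coe_pow, ENNReal.coe_le_coe,
      div_le_iff₀ (hN.partialSum_pos_apply k)]
    calc partialSum w (min n (N k)) ≤ partialSum w (N K) :=
          partialSum_mono w ((min_le_left _ _).trans (Nat.find_spec hex).le)
      _ ≤ _ := hN.partialSum_le_pow_mul hk

end IsBlockSeq

lemma exists_isBlockSeq (hw : Antitone w) (htop : ∑' i, (w i : ℝ≥0∞) = ⊤)
    (hinf : ⨅ i, w i = 0) : ∃ N, IsBlockSeq w N := by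
  have hW : Tendsto (partialSum w) atTop atTop :=
    NNReal.not_summable_iff_tendsto_nat_atTop.1 fun hs =>
      ENNReal.tsum_coe_ne_top_iff_summable.2 hs htop
  have hw0 : Tendsto w atTop (𝓝 0) := hinf ▸ tendsto_atTop_ciInf hw (OrderBot.bddBelow _)
  have hpos : ∀ q, 0 < q → 0 < partialSum w q := by
    intro q hq
    obtain ⟨p, hp⟩ := (hW.eventually_gt_atTop 0).exists
    have hp0 : 0 < w 0 :=
      (sum_pos_iff.1 hp).elim fun j ⟨_, hj⟩ => hj.trans_le (hw j.zero_le)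
    calc 0 < w 0 := hp0
      _ = partialSum w 1 := by simp [partialSum]
      _ ≤ partialSum w q := partialSum_mono w hq
  have step : ∀ k q, ∃ q', 2 * partialSum w q ≤ partialSum w q' ∧
      (q : ℝ≥0) * w (q' - q) ≤ 2⁻¹ ^ (k + 1) * partialSum w q := by
    intro k q
    have hsmall : ∀ᶠ M in atTop, (q : ℝ≥0) * w M ≤ 2⁻¹ ^ (k + 1) * partialSum w q := by
      rcases q.eq_zero_or_pos with rfl | hq
      · simp
      · have hpos' := hpos q hq
        have : Tendsto (fun M => (q : ℝ≥0) * w M) atTop (𝓝 0) := by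
          simpa using hw0.const_mul (q : ℝ≥0)
        exact this.eventually (ge_mem_nhds (by positivity))
    exact ((hW.eventually_ge_atTop _).and ((tendsto_sub_atTop_nat q).eventually hsmall)).exists
  choose f hf using step
  exact ⟨fun k => Nat.rec 1 f k, hpos 1 one_pos, fun k => (hf k _).1, fun k => (hf k _).2⟩

theorem not_reversedSumBounded (hw : Antitone w) (htop : ∑' i, (w i : ℝ≥0∞) = ⊤)
    (hinf : ⨅ i, w i = 0) : ¬ ReversedSumBounded w := by
  rintro ⟨C, hC⟩
  obtain ⟨N, hN⟩ := exists_isBlockSeq hw htop hinf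
  obtain ⟨m, hm⟩ := exists_nat_gt (4 * C)
  set a := ∑ k ∈ range m, block w (N k)
  have ha : Antitone a := fun i j hij => by
    simp only [a, Finset.sum_apply]
    exact sum_le_sum fun k _ => block_antitone w (N k) hij
  have hlhs : ∑' i, ((a i * w i : ℝ≥0) : ℝ≥0∞) = m := by
    rw [tsum_finset_sum_mul,
      sum_congr rfl fun k _ => tsum_block_mul (hN.partialSum_pos_apply k).ne']
    simp
  have hrhs : ⨆ n, reversedSum a w n ≤ 4 := iSup_le fun n => by
    rw [reversedSum_finset_sum]
    exact hN.sum_reversedSum_block_le hw m n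
  have hmC : (m : ℝ≥0∞) ≤ C * 4 :=
    calc (m : ℝ≥0∞) = ∑' i, ((a i * w i : ℝ≥0) : ℝ≥0∞) := hlhs.symm
      _ ≤ C * ⨆ n, reversedSum a w n := hC a ha
      _ ≤ C * 4 := by gcongr
  rw [mul_comm] at hm
  exact hm.not_ge (by exact_mod_cast hmC)

end AntitoneWeight

/-- Main Theorem: for a non-increasing sequence `(w_i)` of non-negative reals,
there exists `C < ∞` with `∑ a_i w_i ≤ C · sup_n ∑_{i=1}^n a_i w_{1+n-i}` for all
non-increasing non-negative `(a_i)` iff `∑ w_i < ∞` or `inf_i w_i > 0`. -/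
theorem stmt_5 (w : ℕ → ℝ≥0) (hw : Antitone w) :
    (∃ C : ℝ≥0, ∀ a : ℕ → ℝ≥0, Antitone a →
      ∑' i : ℕ, ((a i * w i : ℝ≥0) : ℝ≥0∞)
        ≤ (C : ℝ≥0∞) * ⨆ n : ℕ, ∑ i ∈ Finset.range n, ((a i * w (n - 1 - i) : ℝ≥0) : ℝ≥0∞))
    ↔ (∑' i : ℕ, (w i : ℝ≥0∞) ≠ ⊤ ∨ 0 < ⨅ i, w i) := by
  change AntitoneWeight.ReversedSumBounded w ↔ _
  refine ⟨fun h => ?_, fun h => h.elim (AntitoneWeight.reversedSumBounded_of_tsum_ne_top hw)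
    (AntitoneWeight.reversedSumBounded_of_iInf_pos hw)⟩
  by_contra! hcon
  exact AntitoneWeight.not_reversedSumBounded hw hcon.1 (le_bot_iff.1 hcon.2) h
end

section
/- Let (w_i)_{i=1}^∞ be a non-increasing sequence of positive reals with w_i → 0 and ∑ w_i = ∞, and let W(n) = ∑_{i=1}^n w_i. Then there exists a strictly increasing sequence (d_k)_{k=1}^∞ of positive integers such that for all k ≥ 1: W(∑_{j=1}^{k-1} d_j) ≤ (1/2) W(d_k) and W(d_{k-1} + d_k) − W(d_k) ≤ 2^{1−k} W(d_{k-1}) (with d_0 = 0 and the empty sum equal to 0). -/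
/-!
Choose the `d k` greedily. Since `W → ∞`, `d (k+1)` can be taken so large that
`W (d (k+1)) ≥ 2 W (d 1 + ⋯ + d k)`, and since `w → 0` also so large that
`d k * w (d (k+1)) ≤ 2⁻ᵏ W (d k)`. As `w` is non-increasing, the block
`W (d k + d (k+1)) - W (d (k+1))` of `d k` terms is at most `d k * w (d (k+1))`.
-/

open Filter Finset

theorem Antitone.sum_range_add_sub_sum_range_le {R : Type*} [AddCommGroup R] [PartialOrder R]
    [IsOrderedAddMonoid R] {w : ℕ → R} (hw : Antitone w) (a b : ℕ) :
    ∑ i ∈ range (a + b), w i - ∑ i ∈ range b, w i ≤ a • w b := by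
  rw [add_comm, sum_range_add, add_sub_cancel_left]
  simpa using sum_le_card_nsmul (range a) (fun i => w (b + i)) (w b)
    fun i _ => hw (Nat.le_add_right b i)

theorem exists_strictMono_nat_of_exists_gt (P : ℕ → ℕ → ℕ → ℕ → Prop)
    (h : ∀ k m S, ∃ N, m < N ∧ P k m S N) :
    ∃ d : ℕ → ℕ, d 0 = 0 ∧ StrictMono d ∧
      ∀ k, P k (d k) (∑ j ∈ Icc 1 k, d j) (d (k + 1)) := by
  choose next hnext_gt hnext using h
  -- the state at step `k` is the pair `(d k, d 1 + ⋯ + d k)`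
  let state : ℕ → ℕ × ℕ := fun k =>
    Nat.rec (0, 0) (fun k p => (next k p.1 p.2, p.2 + next k p.1 p.2)) k
  have state_succ : ∀ k, state (k + 1) =
      (next k (state k).1 (state k).2, (state k).2 + next k (state k).1 (state k).2) :=
    fun _ => rfl
  have state_snd : ∀ k, (state k).2 = ∑ j ∈ Icc 1 k, (state j).1 := by
    intro k
    induction k with
    | zero => rfl
    | succ k ih => rw [sum_Icc_succ_top (Nat.le_add_left 1 k), ← ih, state_succ]
  refine ⟨fun k => (state k).1, rfl, strictMono_nat_of_lt_succ fun k => ?_, fun k => ?_⟩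
  · exact hnext_gt k _ _
  · simpa only [← state_snd] using hnext k (state k).1 (state k).2

theorem exists_gt_two_mul_sum_range_le_and_mul_le {w : ℕ → ℝ} (hpos : ∀ i, 0 < w i)
    (h0 : Tendsto w atTop (nhds 0))
    (hdiv : Tendsto (fun n => ∑ i ∈ range n, w i) atTop atTop) (k m S : ℕ) :
    ∃ N, m < N ∧ 2 * ∑ i ∈ range S, w i ≤ ∑ i ∈ range N, w i ∧
      m * w N ≤ (2 : ℝ) ^ (-(k : ℤ)) * ∑ i ∈ range m, w i := by
  have hsmall : ∀ᶠ N in atTop, m * w N ≤ (2 : ℝ) ^ (-(k : ℤ)) * ∑ i ∈ range m, w i := by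
    rcases m.eq_zero_or_pos with rfl | hm
    · simp
    have hW : 0 < ∑ i ∈ range m, w i := sum_pos (fun i _ => hpos i) (nonempty_range_iff.2 hm.ne')
    have hlim : Tendsto (fun N => (m : ℝ) * w N) atTop (nhds 0) := by
      simpa using h0.const_mul (m : ℝ)
    exact (hlim.eventually_lt_const (by positivity)).mono fun _ => le_of_lt
  exact ((eventually_gt_atTop m).and ((hdiv.eventually_ge_atTop _).and hsmall)).exists

/-- For a non-increasing sequence `(w_i)` of positive reals tending to `0` whose
partial sums `W(n) = ∑_{i=1}^n w_i` tend to infinity, there is a strictly increasing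
sequence `(d_k)_{k≥1}` of positive integers (with `d_0 = 0`) such that for all `k ≥ 1`,
`W(∑_{j=1}^{k-1} d_j) ≤ (1/2) W(d_k)` and `W(d_{k-1}+d_k) − W(d_k) ≤ 2^{1−k} W(d_{k-1})`. -/
theorem stmt_6 (w : ℕ → ℝ) (hpos : ∀ i, 0 < w i) (hmono : Antitone w)
    (h0 : Tendsto w atTop (nhds 0))
    (hdiv : Tendsto (fun n => ∑ i ∈ Finset.range n, w i) atTop atTop) :
    ∃ d : ℕ → ℕ, d 0 = 0 ∧ StrictMono d ∧ ∀ k : ℕ, 1 ≤ k →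
      ((∑ i ∈ Finset.range (∑ j ∈ Finset.Icc 1 (k - 1), d j), w i)
          ≤ (∑ i ∈ Finset.range (d k), w i) / 2) ∧
      ((∑ i ∈ Finset.range (d (k - 1) + d k), w i) - (∑ i ∈ Finset.range (d k), w i)
          ≤ (2 : ℝ) ^ (1 - (k : ℤ)) * ∑ i ∈ Finset.range (d (k - 1)), w i) := by
  obtain ⟨d, hd0, hd_mono, hstep⟩ := exists_strictMono_nat_of_exists_gt _
    (exists_gt_two_mul_sum_range_le_and_mul_le hpos h0 hdiv)
  refine ⟨d, hd0, hd_mono, ?_⟩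
  rintro (_ | k) hk
  · omega
  obtain ⟨hgrow, hsmall⟩ := hstep k
  simp only [Nat.add_sub_cancel]
  refine ⟨by linarith, ?_⟩
  have hexp : (1 : ℤ) - ((k + 1 : ℕ) : ℤ) = -(k : ℤ) := by push_cast; ring
  rw [hexp]
  calc _ ≤ (d k : ℝ) * w (d (k + 1)) := by
        simpa only [nsmul_eq_mul] using hmono.sum_range_add_sub_sum_range_le (d k) (d (k + 1))
    _ ≤ _ := hsmall
end

section
/- Let (w_i)_{i=1}^∞ be a non-increasing sequence of non-negative reals with w_i → 0 and ∑ w_i = ∞, and let (d_k), (n_k) be as in the recursive construction (d_0 = 0, n_k = ∑_{j=1}^k d_j, with W(n_{k-1}) ≤ (1/2)W(d_k) and W(d_{k-1}+d_k) − W(d_k) ≤ 2^{1−k} W(d_{k-1})). Define for r ∈ ℕ the sequence f^{(r)} = (a_{i,r}) by a_{i,r} = 1/W(d_k) if n_{k-1} < i ≤ n_k for some 1 ≤ k ≤ r, and a_{i,r} = 0 if i > n_r. Then ∑_{i=1}^∞ a_{i,r} w_i ≥ r/2. -/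
open Filter

/-- With `W(n) = ∑_{i=1}^n w_i`, `d_0 = 0`, `(d_k)` strictly increasing satisfying
`W(n_{k-1}) ≤ (1/2) W(d_k)` and `W(d_{k-1}+d_k) − W(d_k) ≤ 2^{1−k} W(d_{k-1})`, where
`n_k = ∑_{j=1}^k d_j`, and `a_{i,r} = 1/W(d_k)` for `n_{k-1} < i ≤ n_k` (`1 ≤ k ≤ r`),
`a_{i,r} = 0` for `i > n_r`, one has `∑_{i=1}^∞ a_{i,r} w_i ≥ r/2`.
(Sequences are indexed from `0`, so `w i` is `w_{i+1}` and `a r i` is `a_{i+1,r}`.) -/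
theorem stmt_9 (w : ℕ → ℝ) (h0 : ∀ i, 0 ≤ w i) (hw : Antitone w)
    (hlim : Tendsto w atTop (nhds 0))
    (hdiv : ¬ Summable w)
    (d : ℕ → ℕ) (hd0 : d 0 = 0) (hdmono : StrictMono d)
    (nseq : ℕ → ℕ) (hn : ∀ k, nseq k = ∑ j ∈ Finset.range (k + 1), d j)
    (hd1 : ∀ k : ℕ, 1 ≤ k →
      (∑ i ∈ Finset.range (nseq (k - 1)), w i)
        ≤ (∑ i ∈ Finset.range (d k), w i) / 2)
    (hd2 : ∀ k : ℕ, 1 ≤ k →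
      (∑ i ∈ Finset.range (d (k - 1) + d k), w i) - (∑ i ∈ Finset.range (d k), w i)
        ≤ (2 : ℝ) ^ (1 - (k : ℤ)) * ∑ i ∈ Finset.range (d (k - 1)), w i)
    (a : ℕ → ℕ → ℝ)
    (ha : ∀ r k i : ℕ, 1 ≤ k → k ≤ r → nseq (k - 1) ≤ i → i < nseq k →
      a r i = 1 / ∑ j ∈ Finset.range (d k), w j)
    (ha0 : ∀ r i : ℕ, nseq r ≤ i → a r i = 0) :
    ∀ r : ℕ, (r : ℝ) / 2 ≤ ∑' i : ℕ, a r i * w i := by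
  -- w 0 > 0
  have hw0 : 0 < w 0 := by
    rcases lt_or_eq_of_le (h0 0) with h | h
    · exact h
    · exfalso
      apply hdiv
      have : ∀ i, w i = 0 := fun i => le_antisymm (h ▸ hw (Nat.zero_le i)) (h0 i)
      have : w = 0 := funext this
      rw [this]; exact summable_zero
  have hWmono : Monotone (fun n => ∑ i ∈ Finset.range n, w i) :=
    fun m n hmn => Finset.sum_le_sum_of_subset_of_nonneg (Finset.range_subset_range.2 hmn)
      (fun i _ _ => h0 i)
  have hWpos : ∀ n, 1 ≤ n → 0 < ∑ i ∈ Finset.range n, w i := by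
    intro n hnn
    calc (0:ℝ) < w 0 := hw0
    _ ≤ ∑ i ∈ Finset.range n, w i :=
      Finset.single_le_sum (fun i _ => h0 i) (Finset.mem_range.2 hnn)
  intro r
  have htsum : ∑' i, a r i * w i = ∑ i ∈ Finset.range (nseq r), a r i * w i := by
    apply tsum_eq_sum
    intro i hi
    simp only [Finset.mem_range, not_lt] at hi
    rw [ha0 r i hi, zero_mul]
  rw [htsum]
  have key : ∀ s, s ≤ r → (s:ℝ)/2 ≤ ∑ i ∈ Finset.range (nseq s), a r i * w i := by
    intro s
    induction s with
    | zero =>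
      intro _
      simp [hn 0, hd0]
    | succ s ih =>
      intro hsr
      have hs1r : s + 1 ≤ r := hsr
      have hsr' : s ≤ r := Nat.le_of_succ_le hsr
      have hstep : nseq s ≤ nseq (s+1) := by
        rw [hn, hn]
        exact Finset.sum_le_sum_of_subset (Finset.range_subset_range.2 (by omega))
      have hds1 : 1 ≤ d (s+1) := by
        have h1 : d 0 < d (s+1) := hdmono (Nat.succ_pos s)
        rw [hd0] at h1
        exact h1
      have hWd : 0 < ∑ j ∈ Finset.range (d (s+1)), w j := hWpos _ hds1
      -- split the sum
      rw [← Finset.sum_range_add_sum_Ico _ hstep]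
      -- evaluate a on the Ico block
      have hval : ∀ i ∈ Finset.Ico (nseq s) (nseq (s+1)),
          a r i * w i = (1 / ∑ j ∈ Finset.range (d (s+1)), w j) * w i := by
        intro i hi
        rw [Finset.mem_Ico] at hi
        rw [ha r (s+1) i (Nat.succ_le_succ (Nat.zero_le s)) hs1r (by simpa using hi.1) hi.2]
      rw [Finset.sum_congr rfl hval, ← Finset.mul_sum]
      have hIco : ∑ i ∈ Finset.Ico (nseq s) (nseq (s+1)), w i
          = ∑ i ∈ Finset.range (nseq (s+1)), w i - ∑ i ∈ Finset.range (nseq s), w i := by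
        rw [Finset.sum_Ico_eq_sub _ hstep]
      have hge : nseq (s+1) ≥ d (s+1) := by
        rw [hn]
        exact Finset.single_le_sum (f := d) (fun i _ => Nat.zero_le _)
          (Finset.mem_range.2 (Nat.lt_succ_self (s+1)))
      have hub : ∑ i ∈ Finset.range (nseq s), w i
          ≤ (∑ i ∈ Finset.range (d (s+1)), w i) / 2 := by
        have := hd1 (s+1) (Nat.succ_le_succ (Nat.zero_le s))
        simpa using this
      have hblock : (∑ j ∈ Finset.range (d (s+1)), w j) / 2
          ≤ ∑ i ∈ Finset.Ico (nseq s) (nseq (s+1)), w i := by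
        rw [hIco]
        have h1 : ∑ i ∈ Finset.range (d (s+1)), w i
            ≤ ∑ i ∈ Finset.range (nseq (s+1)), w i := hWmono hge
        linarith
      have hhalf : (1:ℝ)/2 ≤ (1 / ∑ j ∈ Finset.range (d (s+1)), w j)
          * ∑ i ∈ Finset.Ico (nseq s) (nseq (s+1)), w i := by
        have heq : (1 / ∑ j ∈ Finset.range (d (s+1)), w j)
            * ((∑ j ∈ Finset.range (d (s+1)), w j) / 2) = 1/2 := by
          field_simp
        calc (1:ℝ)/2 = (1 / ∑ j ∈ Finset.range (d (s+1)), w j)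
            * ((∑ j ∈ Finset.range (d (s+1)), w j) / 2) := heq.symm
        _ ≤ _ := mul_le_mul_of_nonneg_left hblock (by positivity)
      have := ih hsr'
      push_cast
      linarith
  exact key r le_rfl
end

section
/- With the same hypotheses and notation as in the previous construction (sequences (d_k), (n_k), and f^{(r)} = (a_{i,r})), for every n ∈ ℕ one has ∑_{i=1}^n a_{i,r} w_{1+n-i} ≤ 3; hence sup_{n∈ℕ} ∑_{i=1}^n a_{i,r} w_{1+n-i} ≤ 3. -/
/-!
On the block `n_{k-1} < i ≤ n_k` the weight `a_{i,r}` is `1 / W(d_k)`, and the block has `d_k`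
terms. As `w` is non-increasing, the block contributes at most `W(d_k) / W(d_k) = 1` to
`∑_{i ≤ n} a_{i,r} w_{1+n-i}`; if moreover `n ≥ n_{k+1}`, the indices `1+n-i` all exceed `d_{k+1}`,
so it contributes at most `(W(d_k + d_{k+1}) - W(d_{k+1})) / W(d_k) ≤ 2^{-k}`. Only the (at most
two) blocks with `n_{k-1} < n < n_{k+1}` need the bound `1`, so the sum is at most `2 + ∑ 2^{-k} ≤ 3`.
-/

open Filter Finset

lemma sum_range_eq_sum_sum_Ico {M : Type*} [AddCommMonoid M] (f : ℕ → M) {c : ℕ → ℕ}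
    (hc : Monotone c) (hc0 : c 0 = 0) (r : ℕ) :
    ∑ i ∈ range (c r), f i = ∑ k ∈ range r, ∑ i ∈ Ico (c k) (c (k + 1)), f i := by
  induction r with
  | zero => simp [hc0]
  | succ r ih =>
    rw [sum_range_succ, ← ih, range_eq_Ico, range_eq_Ico,
      sum_Ico_consecutive f (Nat.zero_le _) (hc r.le_succ)]

lemma sum_range_mul_eq_sum_blocks {a c g : ℕ → ℝ} {N : ℕ → ℕ} (hN : Monotone N) (hN0 : N 0 = 0)
    {r : ℕ} (ha : ∀ k < r, ∀ i ∈ Ico (N k) (N (k + 1)), a i = c k)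
    (ha0 : ∀ i, N r ≤ i → a i = 0) (n : ℕ) :
    ∑ i ∈ range n, a i * g i
      = ∑ k ∈ range r, c k * ∑ i ∈ Ico (min (N k) n) (min (N (k + 1)) n), g i := by
  have htail : ∑ i ∈ range (min (N r) n), a i * g i = ∑ i ∈ range n, a i * g i :=
    sum_subset (range_subset_range.2 (min_le_right _ _)) fun i hi hi' => by
      simp only [mem_range] at hi hi'
      rw [ha0 i (by omega), zero_mul]
  rw [← htail, sum_range_eq_sum_sum_Ico _ (fun _ _ h => min_le_min_right n (hN h))
    (by simp [hN0])]
  refine sum_congr rfl fun k hk => ?_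
  rw [mul_sum]
  refine sum_congr rfl fun i hi => ?_
  simp only [mem_Ico] at hi
  rw [ha k (mem_range.1 hk) i (mem_Ico.2 ⟨by omega, by omega⟩)]

lemma sum_Ico_reflect_le {w : ℕ → ℝ} (hw : Antitone w) (s : ℕ) {t m n : ℕ} (h : t + m ≤ n) :
    ∑ i ∈ Ico s t, w (n - 1 - i) ≤ ∑ j ∈ Ico m (m + (t - s)), w j := by
  calc ∑ i ∈ Ico s t, w (n - 1 - i)
      = ∑ j ∈ range (t - s), w (n - t + (t - s - 1 - j)) := by
        rw [sum_Ico_eq_sum_range]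
        exact sum_congr rfl fun j hj => by rw [mem_range] at hj; congr 1; omega
    _ = ∑ j ∈ range (t - s), w (n - t + j) := sum_range_reflect (fun j => w (n - t + j)) _
    _ ≤ ∑ j ∈ range (t - s), w (m + j) := sum_le_sum fun j _ => hw (by omega)
    _ = ∑ j ∈ Ico m (m + (t - s)), w j := by rw [sum_Ico_eq_sum_range, Nat.add_sub_cancel_left]

lemma card_filter_lt_lt_add_two_le_two {N : ℕ → ℕ} (hN : Monotone N) (n : ℕ) (s : Finset ℕ) :
    #{k ∈ s | N k < n ∧ n < N (k + 2)} ≤ 2 := by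
  set t := {k ∈ s | N k < n ∧ n < N (k + 2)}
  rcases t.eq_empty_or_nonempty with ht | ht
  · simp [ht]
  have hmin := (mem_filter.1 (t.min'_mem ht)).2.2
  have hsub : t ⊆ Icc (t.min' ht) (t.min' ht + 1) := fun k hk => by
    have hk' := (mem_filter.1 hk).2.1
    have : ¬ t.min' ht + 2 ≤ k := fun h => by have := hN h; omega
    exact mem_Icc.2 ⟨t.min'_le k hk, by omega⟩
  exact (card_le_card hsub).trans (by rw [Nat.card_Icc]; omega)

lemma sum_ite_one_le_card_filter_add_sum {s : Finset ℕ} (p : ℕ → Prop) [DecidablePred p]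
    {g : ℕ → ℝ} (hg : ∀ k ∈ s, 0 ≤ g k) :
    ∑ k ∈ s, (if p k then 1 else g k) ≤ #{k ∈ s | p k} + ∑ k ∈ s, g k := by
  rw [sum_ite, sum_const, nsmul_one]
  gcongr
  · exact fun k hk _ => hg k hk
  · exact filter_subset _ s

lemma sum_range_half_pow_succ_le_one (r : ℕ) : ∑ k ∈ range r, (1 / 2 : ℝ) ^ (k + 1) ≤ 1 := by
  simp only [pow_succ, ← sum_mul]
  linarith [sum_geometric_two_le r]

lemma sum_block_div_le {w : ℕ → ℝ} (h0 : ∀ i, 0 ≤ w i) (hw : Antitone w) {d N : ℕ → ℕ}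
    (hN : ∀ k, N (k + 1) = N k + d (k + 1)) {k : ℕ}
    (hd : ∑ i ∈ range (d (k + 1) + d (k + 2)), w i - ∑ i ∈ range (d (k + 2)), w i
      ≤ (1 / 2) ^ (k + 1) * ∑ i ∈ range (d (k + 1)), w i) (n : ℕ) :
    (∑ i ∈ Ico (min (N k) n) (min (N (k + 1)) n), w (n - 1 - i)) / ∑ i ∈ range (d (k + 1)), w i
      ≤ if N k < n ∧ n < N (k + 2) then 1 else (1 / 2) ^ (k + 1) := by
  have hNk := hN k
  have hNk1 : N (k + 2) = N (k + 1) + d (k + 2) := hN (k + 1)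
  have hW : 0 ≤ ∑ i ∈ range (d (k + 1)), w i := sum_nonneg fun i _ => h0 i
  refine div_le_of_le_mul₀ hW (by split_ifs <;> positivity) ?_
  split_ifs with hpartial
  · calc _ ≤ ∑ j ∈ Ico 0 (0 + (min (N (k + 1)) n - min (N k) n)), w j :=
          sum_Ico_reflect_le hw _ (by omega)
      _ ≤ ∑ i ∈ range (d (k + 1)), w i := by
          rw [zero_add, ← range_eq_Ico]
          exact sum_le_sum_of_subset_of_nonneg (range_subset_range.2 (by omega))
            fun i _ _ => h0 i
      _ = _ := (one_mul _).symm
  rcases (not_and_or.1 hpartial).imp not_lt.1 not_lt.1 with hempty | hfull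
  · rw [Ico_eq_empty (by omega), sum_empty]
    exact mul_nonneg (by positivity) hW
  calc _ ≤ ∑ j ∈ Ico (d (k + 2)) (d (k + 2) + (N (k + 1) - N k)), w j := by
        rw [min_eq_left (by omega), min_eq_left (by omega)]
        exact sum_Ico_reflect_le hw _ (by omega)
    _ = ∑ i ∈ range (d (k + 1) + d (k + 2)), w i - ∑ i ∈ range (d (k + 2)), w i := by
        rw [sum_Ico_eq_sub _ (Nat.le_add_right _ _), hNk, Nat.add_sub_cancel_left, add_comm]
    _ ≤ _ := hd

theorem stmt_10_general (w : ℕ → ℝ) (h0 : ∀ i, 0 ≤ w i) (hw : Antitone w)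
    (d : ℕ → ℕ) (hd0 : d 0 = 0)
    (nseq : ℕ → ℕ) (hn : ∀ k, nseq k = ∑ j ∈ Finset.range (k + 1), d j)
    (hd2 : ∀ k : ℕ, 1 ≤ k →
      (∑ i ∈ Finset.range (d (k - 1) + d k), w i) - (∑ i ∈ Finset.range (d k), w i)
        ≤ (2 : ℝ) ^ (1 - (k : ℤ)) * ∑ i ∈ Finset.range (d (k - 1)), w i)
    (a : ℕ → ℕ → ℝ)
    (ha : ∀ r k i : ℕ, 1 ≤ k → k ≤ r → nseq (k - 1) ≤ i → i < nseq k →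
      a r i = 1 / ∑ j ∈ Finset.range (d k), w j)
    (ha0 : ∀ r i : ℕ, nseq r ≤ i → a r i = 0)
    (r : ℕ) :
    (∀ n : ℕ, ∑ i ∈ Finset.range n, a r i * w (n - 1 - i) ≤ 3) ∧
      (⨆ n : ℕ, ∑ i ∈ Finset.range n, a r i * w (n - 1 - i)) ≤ 3 := by
  have hstep (k : ℕ) : nseq (k + 1) = nseq k + d (k + 1) := by rw [hn, hn, sum_range_succ]
  have hmono : Monotone nseq := monotone_nat_of_le_succ fun k => by rw [hstep]; omega
  have hhalf (k : ℕ) : (2 : ℝ) ^ (1 - ((k + 2 : ℕ) : ℤ)) = (1 / 2) ^ (k + 1) := by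
    rw [show 1 - ((k + 2 : ℕ) : ℤ) = -((k + 1 : ℕ) : ℤ) by push_cast; ring, zpow_neg,
      zpow_natCast, one_div, inv_pow]
  have hblock (k : ℕ) := sum_block_div_le h0 hw hstep (k := k)
    (by have h := hd2 (k + 2) (by omega); rwa [show k + 2 - 1 = k + 1 from rfl, hhalf] at h)
  have hle (n : ℕ) : ∑ i ∈ range n, a r i * w (n - 1 - i) ≤ 3 := by
    rw [sum_range_mul_eq_sum_blocks hmono (by rw [hn]; simpa using hd0)
      (fun k hk i hi => ha r (k + 1) i (by omega) hk (mem_Ico.1 hi).1 (mem_Ico.1 hi).2)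
      (ha0 r) n]
    calc _ ≤ ∑ k ∈ range r,
          if nseq k < n ∧ n < nseq (k + 2) then (1 : ℝ) else (1 / 2) ^ (k + 1) :=
          sum_le_sum fun k _ => by rw [one_div_mul_eq_div]; exact hblock k n
      _ ≤ #{k ∈ range r | nseq k < n ∧ n < nseq (k + 2)} + ∑ k ∈ range r, (1 / 2 : ℝ) ^ (k + 1) :=
          sum_ite_one_le_card_filter_add_sum _ fun k _ => by positivity
      _ ≤ 2 + 1 := by
          gcongr
          · exact_mod_cast card_filter_lt_lt_add_two_le_two hmono n _
          · exact sum_range_half_pow_succ_le_one r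
      _ = 3 := by norm_num
  exact ⟨hle, ciSup_le hle⟩

/-- With the notation of the previous construction (`W`, `(d_k)`, `n_k`, `a_{i,r}`),
for every `n` one has `∑_{i=1}^n a_{i,r} w_{1+n-i} ≤ 3`, and hence
`sup_n ∑_{i=1}^n a_{i,r} w_{1+n-i} ≤ 3`.
(Sequences are indexed from `0`, so `w i` is `w_{i+1}` and `a r i` is `a_{i+1,r}`.) -/
theorem stmt_10 (w : ℕ → ℝ) (h0 : ∀ i, 0 ≤ w i) (hw : Antitone w)
    (hlim : Tendsto w atTop (nhds 0))
    (hdiv : ¬ Summable w)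
    (d : ℕ → ℕ) (hd0 : d 0 = 0) (hdmono : StrictMono d)
    (nseq : ℕ → ℕ) (hn : ∀ k, nseq k = ∑ j ∈ Finset.range (k + 1), d j)
    (hd1 : ∀ k : ℕ, 1 ≤ k →
      (∑ i ∈ Finset.range (nseq (k - 1)), w i)
        ≤ (∑ i ∈ Finset.range (d k), w i) / 2)
    (hd2 : ∀ k : ℕ, 1 ≤ k →
      (∑ i ∈ Finset.range (d (k - 1) + d k), w i) - (∑ i ∈ Finset.range (d k), w i)
        ≤ (2 : ℝ) ^ (1 - (k : ℤ)) * ∑ i ∈ Finset.range (d (k - 1)), w i)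
    (a : ℕ → ℕ → ℝ)
    (ha : ∀ r k i : ℕ, 1 ≤ k → k ≤ r → nseq (k - 1) ≤ i → i < nseq k →
      a r i = 1 / ∑ j ∈ Finset.range (d k), w j)
    (ha0 : ∀ r i : ℕ, nseq r ≤ i → a r i = 0)
    (r : ℕ) :
    (∀ n : ℕ, ∑ i ∈ Finset.range n, a r i * w (n - 1 - i) ≤ 3) ∧
      (⨆ n : ℕ, ∑ i ∈ Finset.range n, a r i * w (n - 1 - i)) ≤ 3 :=
  stmt_10_general w h0 hw d hd0 nseq hn hd2 a ha ha0 r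
end

section
/- Fix 1 ≤ p < ∞ and a non-increasing sequence w = (w_i) of positive reals with w_1 = 1. Define the Garling norm ‖f‖_{g(w,p)} = sup_{φ∈O} (∑_{i=1}^∞ |b_{φ(i)}|^p w_i)^{1/p} for f = (b_k), where O is the set of strictly increasing maps ℕ → ℕ. Suppose there is a constant C such that ‖g‖_{g(w,p)} ≤ C‖f‖_{g(w,p)} whenever g is a permutation of f. Then for every non-increasing sequence (a_i) of non-negative reals, ∑_{i=1}^∞ a_i w_i ≤ C^p · sup_{n∈ℕ} ∑_{i=1}^n a_i w_{1+n-i}. -/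
open scoped NNReal ENNReal

/-- The Garling norm `‖f‖_{g(w,p)} = sup_{φ strictly increasing} (∑_i |f(φ(i))|^p w_i)^{1/p}`,
with values in `[0,∞]`. -/
noncomputable def garlingNorm (w : ℕ → ℝ) (p : ℝ) (f : ℕ → ℝ) : ℝ≥0∞ :=
  (⨆ φ : {φ : ℕ → ℕ // StrictMono φ},
    ∑' i : ℕ, ENNReal.ofReal (|f (φ.1 i)| ^ p * w i)) ^ (1 / p)

private lemma strictMono_add_le' {φ : ℕ → ℕ} (h : StrictMono φ) (i d : ℕ) :
    φ i + d ≤ φ (i + d) := by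
  induction d with
  | zero => simp
  | succ d ih =>
    have h2 : φ (i + d) < φ (i + d + 1) := h (Nat.lt_succ_self _)
    show φ i + (d + 1) ≤ φ (i + d + 1)
    omega

private lemma lower_eq_range (T : Finset ℕ) (h : ∀ j ∈ T, ∀ i, i < j → i ∈ T) :
    T = Finset.range T.card := by
  rcases T.eq_empty_or_nonempty with rfl | hne
  · simp
  · have hM : T.max' hne ∈ T := T.max'_mem hne
    have hT : T = Finset.range (T.max' hne + 1) := by
      ext j
      simp only [Finset.mem_range, Nat.lt_succ_iff]
      constructor
      · exact fun hj => Finset.le_max' T j hj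
      · intro hj
        rcases eq_or_lt_of_le hj with rfl | hlt
        · exact hM
        · exact h _ hM j hlt
    have hc : T.card = T.max' hne + 1 := by
      conv_lhs => rw [hT]
      rw [Finset.card_range]
    rw [hc]
    exact hT

/-- If the canonical basis of `g(w,p)` is `C`-symmetric, i.e. `‖f ∘ π‖ ≤ C ‖f‖` for
every sequence `f` and every permutation `π` of the indices, then for every
non-increasing sequence `(a_i)` of non-negative reals,
`∑_{i=1}^∞ a_i w_i ≤ C^p · sup_n ∑_{i=1}^n a_i w_{1+n-i}`. -/
theorem stmt_13 (p : ℝ) (hp : 1 ≤ p) (w : ℕ → ℝ) (hwpos : ∀ i, 0 < w i)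
    (hw : Antitone w) (hw1 : w 0 = 1) (C : ℝ) (hC : 0 ≤ C)
    (hsym : ∀ f : ℕ → ℝ, ∀ π : Equiv.Perm ℕ,
      garlingNorm w p (f ∘ π) ≤ ENNReal.ofReal C * garlingNorm w p f) :
    ∀ a : ℕ → ℝ, (∀ i, 0 ≤ a i) → Antitone a →
      ∑' i : ℕ, ENNReal.ofReal (a i * w i)
        ≤ ENNReal.ofReal C ^ p *
          ⨆ n : ℕ, ∑ i ∈ Finset.range n, ENNReal.ofReal (a i * w (n - 1 - i)) := by
  intro a ha hamono
  have hp0 : (0:ℝ) < p := lt_of_lt_of_le one_pos hp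
  have hpne : p ≠ 0 := ne_of_gt hp0
  have habs : ∀ x : ℝ, 0 ≤ x → |x ^ (1/p)| ^ p = x := by
    intro x hx
    rw [abs_of_nonneg (Real.rpow_nonneg hx _), ← Real.rpow_mul hx,
      one_div_mul_cancel hpne, Real.rpow_one]
  have hkey : ∀ g : ℕ → ℝ, garlingNorm w p g ^ p
      = ⨆ φ : {φ : ℕ → ℕ // StrictMono φ},
          ∑' i : ℕ, ENNReal.ofReal (|g (φ.1 i)| ^ p * w i) := by
    intro g
    rw [garlingNorm, ← ENNReal.rpow_mul, one_div_mul_cancel hpne, ENNReal.rpow_one]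
  set S : ℝ≥0∞ := ⨆ n : ℕ, ∑ i ∈ Finset.range n, ENNReal.ofReal (a i * w (n - 1 - i))
    with hSdef
  rw [ENNReal.tsum_eq_iSup_nat]
  refine iSup_le fun n => ?_
  -- the finitely supported "reversed" sequence
  set f : ℕ → ℝ := fun i => if i < n then (a (n - 1 - i)) ^ (1/p) else 0 with hfdef
  set rev : ℕ → ℕ := fun i => if i < n then n - 1 - i else i with hrevdef
  have hinv : Function.Involutive rev := by
    intro i
    simp only [hrevdef]
    split_ifs <;> omega
  set π : Equiv.Perm ℕ := ⟨rev, rev, hinv, hinv⟩ with hπdef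
  -- lower bound : the partial sum is at most `‖f ∘ π‖^p`
  have h1 : ∑ i ∈ Finset.range n, ENNReal.ofReal (a i * w i)
      ≤ garlingNorm w p (f ∘ π) ^ p := by
    rw [hkey]
    refine le_trans ?_ (le_iSup _ ⟨id, strictMono_id⟩)
    refine le_trans ?_ (ENNReal.sum_le_tsum (Finset.range n))
    refine Finset.sum_le_sum fun i hi => ?_
    have hi' : i < n := Finset.mem_range.mp hi
    have e1 : (π : ℕ → ℕ) i = n - 1 - i := by
      show rev i = n - 1 - i
      simp only [hrevdef]
      rw [if_pos hi']
    have e2 : n - 1 - i < n := by omega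
    have e3 : n - 1 - (n - 1 - i) = i := by omega
    have e4 : f ((π : ℕ → ℕ) i) = (a i) ^ (1/p) := by
      rw [e1]
      simp only [hfdef]
      rw [if_pos e2, e3]
    apply le_of_eq
    congr 1
    simp only [Function.comp_apply, id_eq]
    rw [e4, habs _ (ha i)]
  -- upper bound : `‖f‖^p ≤ S`
  have h2 : garlingNorm w p f ^ p ≤ S := by
    rw [hkey]
    refine iSup_le fun φ => ?_
    have hvanish : ∀ i ∉ Finset.range n, ENNReal.ofReal (|f (φ.1 i)| ^ p * w i) = 0 := by
      intro i hi
      have hni : n ≤ i := by simpa using hi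
      have hnφ : n ≤ φ.1 i := le_trans hni φ.2.le_apply
      have : f (φ.1 i) = 0 := by
        simp only [hfdef]
        rw [if_neg (not_lt.mpr hnφ)]
      rw [this, abs_zero, Real.zero_rpow hpne, zero_mul, ENNReal.ofReal_zero]
    rw [tsum_eq_sum hvanish]
    set T : Finset ℕ := (Finset.range n).filter (fun i => φ.1 i < n) with hTdef
    have hTsub : T ⊆ Finset.range n := Finset.filter_subset _ _
    have hsum1 : ∑ i ∈ Finset.range n, ENNReal.ofReal (|f (φ.1 i)| ^ p * w i)
        = ∑ i ∈ T, ENNReal.ofReal (|f (φ.1 i)| ^ p * w i) := by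
      refine (Finset.sum_subset hTsub fun i hi hiT => ?_).symm
      have hnφ : n ≤ φ.1 i := by
        by_contra hlt
        exact hiT (Finset.mem_filter.mpr ⟨hi, not_le.mp hlt⟩)
      have : f (φ.1 i) = 0 := by
        simp only [hfdef]
        rw [if_neg (not_lt.mpr hnφ)]
      rw [this, abs_zero, Real.zero_rpow hpne, zero_mul, ENNReal.ofReal_zero]
    rw [hsum1]
    have hTlow : ∀ j ∈ T, ∀ i, i < j → i ∈ T := by
      intro j hj i hij
      rw [hTdef, Finset.mem_filter, Finset.mem_range] at hj ⊢
      exact ⟨hij.trans hj.1, (φ.2 hij).trans hj.2⟩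
    have hTr : T = Finset.range T.card := lower_eq_range T hTlow
    set k := T.card with hkdef
    have hmem : ∀ i, i < k → (i < n ∧ φ.1 i < n) := by
      intro i hik
      have : i ∈ T := by rw [hTr]; exact Finset.mem_range.mpr hik
      rw [hTdef, Finset.mem_filter, Finset.mem_range] at this
      exact this
    rw [hTr]
    have hterm : ∀ i ∈ Finset.range k,
        ENNReal.ofReal (|f (φ.1 i)| ^ p * w i)
          ≤ ENNReal.ofReal (a (k - 1 - i) * w i) := by
      intro i hi
      have hik : i < k := Finset.mem_range.mp hi
      obtain ⟨hin, hφn⟩ := hmem i hik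
      obtain ⟨_, hφk⟩ := hmem (k - 1) (by omega)
      have hstep := strictMono_add_le' φ.2 i (k - 1 - i)
      have e : i + (k - 1 - i) = k - 1 := by omega
      rw [e] at hstep
      have hle : k - 1 - i ≤ n - 1 - φ.1 i := by omega
      have e2 : f (φ.1 i) = (a (n - 1 - φ.1 i)) ^ (1/p) := by
        simp only [hfdef]
        rw [if_pos hφn]
      rw [e2, habs _ (ha _)]
      exact ENNReal.ofReal_le_ofReal
        (mul_le_mul_of_nonneg_right (hamono hle) (hwpos i).le)
    refine le_trans (Finset.sum_le_sum hterm) ?_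
    have hrefl : ∑ i ∈ Finset.range k, ENNReal.ofReal (a (k - 1 - i) * w i)
        = ∑ i ∈ Finset.range k, ENNReal.ofReal (a i * w (k - 1 - i)) := by
      rw [← Finset.sum_range_reflect (fun i => ENNReal.ofReal (a i * w (k - 1 - i))) k]
      refine Finset.sum_congr rfl fun i hi => ?_
      have hik : i < k := Finset.mem_range.mp hi
      have : k - 1 - (k - 1 - i) = i := by omega
      rw [this]
    rw [hrefl, hSdef]
    exact le_iSup (fun m => ∑ i ∈ Finset.range m, ENNReal.ofReal (a i * w (m - 1 - i))) k
  calc ∑ i ∈ Finset.range n, ENNReal.ofReal (a i * w i)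
      ≤ garlingNorm w p (f ∘ π) ^ p := h1
    _ ≤ (ENNReal.ofReal C * garlingNorm w p f) ^ p :=
        ENNReal.rpow_le_rpow (hsym f π) hp0.le
    _ = ENNReal.ofReal C ^ p * garlingNorm w p f ^ p :=
        ENNReal.mul_rpow_of_nonneg _ _ hp0.le
    _ ≤ ENNReal.ofReal C ^ p * S := mul_le_mul_right h2 _
end

section
/- Fix 1 ≤ p < ∞ and w = (w_i) a non-increasing sequence of positive reals with w_1 = 1, w_i → 0, and ∑ w_i = ∞. Then there is no constant C < ∞ such that ‖(b_{π(k)})_k‖_{g(w,p)} ≤ C ‖(b_k)_k‖_{g(w,p)} for all sequences (b_k) with finite Garling norm and all bijections π of ℕ. (In particular, the canonical basis of the Garling space g(w,p) is not symmetric.) -/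
/-!
Cut `ℕ` into consecutive blocks `[a r, a (r + 1))` and let `x` be constant equal to `1 / S (a (r + 1))`
on block `r`, where `S n = w 0 + ⋯ + w (n - 1)`. If `S` at least doubles from one endpoint to the
next, every block contributes at least `1 / 2` to `∑ x j * w j`, so the first `2 k` blocks carry
mass at least `k`.

Reversing these blocks makes the sequence nondecreasing, and against a nondecreasing sequence a
strictly increasing `φ` does best on a final segment; what has to be bounded is then the reversed
convolution `∑ j < n, x j * w (n - 1 - j)`. The two blocks nearest to `n` contribute at most `1`
each. An earlier block `r` only meets weights `w i` with `i` beyond the length of block `r + 1`,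
and since `w → 0` that length can be chosen so large that block `r` contributes at most
`2 ^ -(r + 1)`. So the reversed sequence has Garling norm at most `3 ^ (1 / p)`, while its
rearrangement has norm at least `k ^ (1 / p)`.
-/

open scoped NNReal ENNReal
open Filter

open Finset

theorem Antitone.sum_le_sum_range_card {w : ℕ → ℝ} (hw : Antitone w) (s : Finset ℕ) :
    ∑ i ∈ s, w i ≤ ∑ i ∈ range #s, w i := by
  induction s using Finset.induction_on_max with
  | empty => simp
  | insert a s hlt ih =>
    have has : a ∉ s := fun h => lt_irrefl a (hlt a h)
    have hcard : #s ≤ a := by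
      simpa using card_le_card (fun x hx => mem_range.2 (hlt x hx) : s ⊆ range a)
    rw [sum_insert has, card_insert_of_notMem has, sum_range_succ, add_comm]
    exact add_le_add ih (hw hcard)

def reflectBelow (T : ℕ) : Equiv.Perm ℕ :=
  Function.Involutive.toPerm (fun n => if n < T then T - 1 - n else n) fun n => by
    dsimp only
    split_ifs <;> omega

theorem reflectBelow_of_lt {T n : ℕ} (h : n < T) : reflectBelow T n = T - 1 - n := if_pos h

theorem reflectBelow_of_le {T n : ℕ} (h : T ≤ n) : reflectBelow T n = n := if_neg h.not_gt

theorem reflectBelow_involutive (T : ℕ) : Function.Involutive (reflectBelow T) :=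
  Function.Involutive.toPerm_involutive _

theorem sum_comp_reflectBelow_le {y w : ℕ → ℝ} {T : ℕ} {B : ℝ} (hy : Antitone y)
    (hyT : ∀ j, T ≤ j → y j = 0) (hw : ∀ i, 0 ≤ w i)
    (hB : ∀ n ≤ T, ∑ j ∈ range n, y j * w (n - 1 - j) ≤ B) {φ : ℕ → ℕ} (hφ : StrictMono φ)
    (N : ℕ) : ∑ i ∈ range N, y (reflectBelow T (φ i)) * w i ≤ B := by
  have hy0 : ∀ j, 0 ≤ y j := fun j => hyT (j + T) (by omega) ▸ hy (by omega)
  have hex : ∃ i, T ≤ φ i := ⟨T, hφ.id_le T⟩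
  set n := Nat.find hex
  have hlt : ∀ i < n, φ i < T := fun i hi => not_le.1 (Nat.find_min hex hi)
  have hzero : ∀ i, n ≤ i → y (reflectBelow T (φ i)) * w i = 0 := by
    intro i hi
    have hTi : T ≤ φ i := (Nat.find_spec hex).trans (hφ.monotone hi)
    rw [reflectBelow_of_le hTi, hyT _ hTi, zero_mul]
  -- `φ i ≤ T - n + i`, since `φ` is strictly increasing and `φ (n - 1) < T`
  have hcomp : ∀ i < n, y (reflectBelow T (φ i)) ≤ y (n - 1 - i) := by
    intro i hi
    have h1 := hφ.add_le_nat (n - 1 - i) i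
    have h2 := hlt (n - 1 - i + i) (by omega)
    rw [reflectBelow_of_lt (hlt i hi)]
    exact hy (by omega)
  calc ∑ i ∈ range N, y (reflectBelow T (φ i)) * w i
      = ∑ i ∈ range N with i < n, y (reflectBelow T (φ i)) * w i :=
        (sum_filter_of_ne fun i _ h => not_le.1 fun hi => h (hzero i hi)).symm
    _ ≤ ∑ i ∈ range n, y (reflectBelow T (φ i)) * w i :=
        sum_le_sum_of_subset_of_nonneg (fun i hi => mem_range.2 (mem_filter.1 hi).2)
          fun i _ _ => mul_nonneg (hy0 _) (hw i)
    _ ≤ ∑ i ∈ range n, y (n - 1 - i) * w i :=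
        sum_le_sum fun i hi => mul_le_mul_of_nonneg_right (hcomp i (mem_range.1 hi)) (hw i)
    _ = ∑ j ∈ range n, y j * w (n - 1 - j) := by
        rw [← sum_range_reflect (fun j => y j * w (n - 1 - j))]
        refine sum_congr rfl fun i hi => ?_
        rw [show n - 1 - (n - 1 - i) = i by have := mem_range.1 hi; omega]
    _ ≤ B := hB n (Nat.find_min' hex (hφ.id_le T))

theorem garlingNorm_le_of_forall_sum_le {w : ℕ → ℝ} {p B : ℝ} {f : ℕ → ℝ} (hp : 0 ≤ p)
    (hw : ∀ i, 0 ≤ w i)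
    (h : ∀ φ : ℕ → ℕ, StrictMono φ → ∀ N, ∑ i ∈ range N, |f (φ i)| ^ p * w i ≤ B) :
    garlingNorm w p f ≤ ENNReal.ofReal B ^ (1 / p) := by
  refine ENNReal.rpow_le_rpow (iSup_le fun φ => ENNReal.tsum_le_of_sum_range_le fun N => ?_)
    (by positivity)
  rw [← ENNReal.ofReal_sum_of_nonneg fun i _ =>
    mul_nonneg (Real.rpow_nonneg (abs_nonneg _) _) (hw i)]
  exact ENNReal.ofReal_le_ofReal (h φ.1 φ.2 N)

theorem ofReal_sum_rpow_le_garlingNorm {w : ℕ → ℝ} {p : ℝ} (hp : 0 ≤ p) (hw : ∀ i, 0 ≤ w i)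
    (f : ℕ → ℝ) (N : ℕ) :
    ENNReal.ofReal (∑ i ∈ range N, |f i| ^ p * w i) ^ (1 / p) ≤ garlingNorm w p f := by
  refine ENNReal.rpow_le_rpow ?_ (by positivity)
  rw [ENNReal.ofReal_sum_of_nonneg fun i _ =>
    mul_nonneg (Real.rpow_nonneg (abs_nonneg _) _) (hw i)]
  exact (ENNReal.sum_le_tsum _).trans (le_iSup (fun φ : {φ : ℕ → ℕ // StrictMono φ} =>
    ∑' i, ENNReal.ofReal (|f (φ.1 i)| ^ p * w i)) ⟨id, strictMono_id⟩)

theorem sum_range_pos {w : ℕ → ℝ} (hw : ∀ i, 0 < w i) {n : ℕ} (hn : 0 < n) :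
    0 < ∑ i ∈ range n, w i :=
  sum_pos (fun i _ => hw i) (nonempty_range_iff.2 hn.ne')

def blockIndex (a : ℕ → ℕ) (j : ℕ) : ℕ := Nat.findGreatest (fun r => a r ≤ j) j

noncomputable def blockProfile (w : ℕ → ℝ) (a : ℕ → ℕ) (j : ℕ) : ℝ :=
  (∑ i ∈ range (a (blockIndex a j + 1)), w i)⁻¹

section Blocks

variable {w : ℕ → ℝ} {a : ℕ → ℕ}

theorem blockIndex_mono : Monotone (blockIndex a) :=
  fun _ _ h => Nat.findGreatest_mono (fun _ hr => hr.trans h) h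

theorem blockIndex_spec (ha0 : a 0 = 0) (ha : StrictMono a) (j : ℕ) :
    a (blockIndex a j) ≤ j ∧ j < a (blockIndex a j + 1) := by
  refine ⟨Nat.findGreatest_spec (P := fun r => a r ≤ j) (Nat.zero_le j) (by simp [ha0]), ?_⟩
  by_contra! h
  rcases Nat.lt_or_ge (blockIndex a j) j with hlt | hge
  · exact Nat.findGreatest_is_greatest (Nat.lt_succ_self _) hlt h
  · have h1 : blockIndex a j + 1 ≤ a (blockIndex a j + 1) := ha.id_le _
    have h2 : blockIndex a j ≤ j := Nat.findGreatest_le j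
    omega

theorem blockIndex_eq_of_mem (ha0 : a 0 = 0) (ha : StrictMono a) {j r : ℕ} (h1 : a r ≤ j)
    (h2 : j < a (r + 1)) : blockIndex a j = r := by
  obtain ⟨h3, h4⟩ := blockIndex_spec ha0 ha j
  by_contra hne
  rcases Nat.lt_or_gt_of_ne hne with hlt | hgt
  · have := ha.monotone (show blockIndex a j + 1 ≤ r by omega)
    omega
  · have := ha.monotone (show r + 1 ≤ blockIndex a j by omega)
    omega

theorem blockProfile_nonneg (hw : ∀ i, 0 ≤ w i) (j : ℕ) : 0 ≤ blockProfile w a j :=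
  inv_nonneg.2 (sum_nonneg fun i _ => hw i)

theorem blockProfile_antitone (hw : ∀ i, 0 < w i) (ha : StrictMono a) :
    Antitone (blockProfile w a) := fun _ _ hjk =>
  inv_anti₀ (sum_range_pos hw ((Nat.zero_le _).trans_lt (ha (Nat.lt_succ_self _))))
    (sum_le_sum_of_subset_of_nonneg
      (range_subset_range.2 (ha.monotone (Nat.succ_le_succ (blockIndex_mono hjk))))
      fun i _ _ => (hw i).le)

theorem sum_filter_blockProfile_mul (s : Finset ℕ) (r : ℕ) (v : ℕ → ℝ) :
    ∑ j ∈ s with blockIndex a j = r, blockProfile w a j * v j =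
      (∑ i ∈ range (a (r + 1)), w i)⁻¹ * ∑ j ∈ s with blockIndex a j = r, v j := by
  rw [mul_sum]
  exact sum_congr rfl fun j hj => by rw [blockProfile, (mem_filter.1 hj).2]

theorem card_filter_blockIndex_le (ha0 : a 0 = 0) (ha : StrictMono a) (s : Finset ℕ) (r : ℕ) :
    #{j ∈ s | blockIndex a j = r} ≤ a (r + 1) := by
  refine (card_le_card fun j hj => ?_).trans (card_range _).le
  obtain ⟨_, hr⟩ := mem_filter.1 hj
  exact mem_range.2 (hr ▸ (blockIndex_spec ha0 ha j).2)

theorem le_sum_blockProfile_mul (hw : ∀ i, 0 < w i) (ha0 : a 0 = 0) (ha : StrictMono a)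
    (hdouble : ∀ r, 2 * ∑ i ∈ range (a r), w i ≤ ∑ i ∈ range (a (r + 1)), w i) (k : ℕ) :
    (k : ℝ) / 2 ≤ ∑ j ∈ range (a k), blockProfile w a j * w j := by
  induction k with
  | zero => simp [ha0]
  | succ k ih =>
    have hle := ha.monotone k.le_succ
    have hS := sum_range_pos hw ((Nat.zero_le _).trans_lt (ha (Nat.lt_succ_self k)))
    have hblock : ∑ j ∈ Ico (a k) (a (k + 1)), blockProfile w a j * w j =
        (∑ i ∈ range (a (k + 1)), w i)⁻¹ *
          (∑ i ∈ range (a (k + 1)), w i - ∑ i ∈ range (a k), w i) := by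
      rw [← sum_Ico_eq_sub _ hle, mul_sum]
      refine sum_congr rfl fun j hj => ?_
      obtain ⟨h1, h2⟩ := mem_Ico.1 hj
      rw [blockProfile, blockIndex_eq_of_mem ha0 ha h1 h2]
    have hhalf : 1 / 2 ≤ (∑ i ∈ range (a (k + 1)), w i)⁻¹ *
        (∑ i ∈ range (a (k + 1)), w i - ∑ i ∈ range (a k), w i) := by
      rw [inv_mul_eq_div, le_div_iff₀ hS]
      linarith [hdouble k]
    rw [← sum_range_add_sum_Ico _ hle, hblock]
    push_cast
    linarith

theorem sum_filter_blockProfile_mul_reflect_le_one (hw : ∀ i, 0 < w i) (hwa : Antitone w)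
    (ha0 : a 0 = 0) (ha : StrictMono a) (n r : ℕ) :
    ∑ j ∈ range (n + 1) with blockIndex a j = r, blockProfile w a j * w (n - j) ≤ 1 := by
  set F := {j ∈ range (n + 1) | blockIndex a j = r}
  have hS := sum_range_pos hw ((Nat.zero_le _).trans_lt (ha r.lt_add_one))
  have hinj : Set.InjOn (n - ·) F := fun j hj k hk h => by
    have := mem_range.1 (mem_filter.1 hj).1
    have := mem_range.1 (mem_filter.1 hk).1
    simp only at h
    omega
  have hF : ∑ j ∈ F, w (n - j) ≤ ∑ i ∈ range (a (r + 1)), w i := calc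
    ∑ j ∈ F, w (n - j) = ∑ i ∈ F.image (n - ·), w i := (sum_image hinj).symm
    _ ≤ ∑ i ∈ range #F, w i := by
        rw [← card_image_of_injOn hinj]
        exact hwa.sum_le_sum_range_card _
    _ ≤ ∑ i ∈ range (a (r + 1)), w i :=
        sum_le_sum_of_subset_of_nonneg
          (range_subset_range.2 (card_filter_blockIndex_le ha0 ha _ r)) fun i _ _ => (hw i).le
  rw [sum_filter_blockProfile_mul, inv_mul_le_iff₀ hS, mul_one]
  exact hF

theorem sum_filter_blockProfile_mul_reflect_le_half_pow (hw : ∀ i, 0 < w i) (hwa : Antitone w)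
    (ha0 : a 0 = 0) (ha : StrictMono a)
    (hfar : ∀ r, 2 ^ r * a r * w (a (r + 1) - a r) ≤ ∑ i ∈ range (a r), w i) {n r : ℕ}
    (hr : r + 2 ≤ blockIndex a n) :
    ∑ j ∈ range (n + 1) with blockIndex a j = r, blockProfile w a j * w (n - j) ≤
      (1 / 2) ^ (r + 1) := by
  set F := {j ∈ range (n + 1) | blockIndex a j = r}
  have hS := sum_range_pos hw ((Nat.zero_le _).trans_lt (ha r.lt_add_one))
  -- block `r` lies at distance at least the length of block `r + 1` from `n`
  have hgap : ∀ j ∈ F, w (n - j) ≤ w (a (r + 2) - a (r + 1)) := by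
    intro j hj
    obtain ⟨hjn, hjr⟩ := mem_filter.1 hj
    have h1 := (blockIndex_spec ha0 ha j).2
    have h2 := (ha.monotone hr).trans (blockIndex_spec ha0 ha n).1
    rw [hjr, mem_range] at *
    exact hwa (by omega)
  have hF : ∑ j ∈ F, w (n - j) ≤ a (r + 1) * w (a (r + 2) - a (r + 1)) := calc
    ∑ j ∈ F, w (n - j) ≤ #F • w (a (r + 2) - a (r + 1)) := sum_le_card_nsmul _ _ _ hgap
    _ ≤ a (r + 1) * w (a (r + 2) - a (r + 1)) := by
        rw [nsmul_eq_mul]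
        exact mul_le_mul_of_nonneg_right (by exact_mod_cast card_filter_blockIndex_le ha0 ha _ r)
          (hw _).le
  have hfar' : 2 ^ (r + 1) * a (r + 1) * w (a (r + 2) - a (r + 1)) ≤
      ∑ i ∈ range (a (r + 1)), w i := hfar (r + 1)
  rw [sum_filter_blockProfile_mul, inv_mul_le_iff₀ hS, one_div_pow, mul_one_div,
    le_div_iff₀ (by positivity)]
  nlinarith [pow_pos (two_pos (α := ℝ)) (r + 1)]

theorem sum_blockProfile_mul_reflect_le (hw : ∀ i, 0 < w i) (hwa : Antitone w)
    (ha0 : a 0 = 0) (ha : StrictMono a)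
    (hfar : ∀ r, 2 ^ r * a r * w (a (r + 1) - a r) ≤ ∑ i ∈ range (a r), w i) (n : ℕ) :
    ∑ j ∈ range n, blockProfile w a j * w (n - 1 - j) ≤ 3 := by
  rcases n with _ | n
  · norm_num
  simp only [Nat.add_sub_cancel]
  set q := blockIndex a n
  rw [← sum_fiberwise_of_maps_to (g := blockIndex a) (t := range (q + 1))
    fun j hj => mem_range.2 (Nat.lt_succ_of_le (blockIndex_mono (mem_range_succ_iff.1 hj))),
    ← sum_range_add_sum_Ico _ (show q - 1 ≤ q + 1 by omega)]
  have hfarBlocks : ∑ r ∈ range (q - 1), ∑ j ∈ range (n + 1) with blockIndex a j = r,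
      blockProfile w a j * w (n - j) ≤ 1 := calc
    _ ≤ ∑ r ∈ range (q - 1), (1 / 2 : ℝ) ^ (r + 1) := sum_le_sum fun r hr =>
        sum_filter_blockProfile_mul_reflect_le_half_pow hw hwa ha0 ha hfar
          (by have := mem_range.1 hr; omega)
    _ ≤ 1 := by
        simp only [pow_succ, ← sum_mul]
        linarith [sum_geometric_two_le (q - 1)]
  have hnearBlocks : ∑ r ∈ Ico (q - 1) (q + 1), ∑ j ∈ range (n + 1) with blockIndex a j = r,
      blockProfile w a j * w (n - j) ≤ 2 := calc
    _ ≤ #(Ico (q - 1) (q + 1)) • (1 : ℝ) := sum_le_card_nsmul _ _ _ fun r _ =>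
        sum_filter_blockProfile_mul_reflect_le_one hw hwa ha0 ha n r
    _ ≤ 2 := by
        rw [Nat.card_Ico, nsmul_one]
        exact_mod_cast (by omega : q + 1 - (q - 1) ≤ 2)
  linarith

end Blocks

theorem exists_block_endpoints {w : ℕ → ℝ} (hw : ∀ i, 0 < w i) (hlim : Tendsto w atTop (nhds 0))
    (hdiv : ¬ Summable w) :
    ∃ a : ℕ → ℕ, a 0 = 0 ∧ StrictMono a ∧
      (∀ r, 2 * ∑ i ∈ range (a r), w i ≤ ∑ i ∈ range (a (r + 1)), w i) ∧
      ∀ r, 2 ^ r * a r * w (a (r + 1) - a r) ≤ ∑ i ∈ range (a r), w i := by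
  have hS : Tendsto (fun n => ∑ i ∈ range n, w i) atTop atTop :=
    (not_summable_iff_tendsto_nat_atTop_of_nonneg fun i => (hw i).le).1 hdiv
  have hstep : ∀ r b : ℕ, ∃ g, 1 ≤ g ∧
      2 * ∑ i ∈ range b, w i ≤ ∑ i ∈ range (b + g), w i ∧
      2 ^ r * b * w g ≤ ∑ i ∈ range b, w i := by
    intro r b
    have hsmall : ∀ᶠ g in atTop, (2 : ℝ) ^ r * b * w g ≤ ∑ i ∈ range b, w i := by
      rcases b.eq_zero_or_pos with rfl | hb
      · simp
      · have h0 : Tendsto (fun g => (2 : ℝ) ^ r * b * w g) atTop (nhds 0) := by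
          simpa using hlim.const_mul ((2 : ℝ) ^ r * b)
        exact h0.eventually (ge_mem_nhds (sum_range_pos hw hb))
    have hlarge : ∀ᶠ g in atTop, 2 * ∑ i ∈ range b, w i ≤ ∑ i ∈ range (b + g), w i :=
      (hS.comp (tendsto_atTop_mono (Nat.le_add_left · b) tendsto_id)).eventually_ge_atTop _
    exact ((eventually_ge_atTop 1).and (hlarge.and hsmall)).exists
  choose G hG1 hG2 hG3 using hstep
  let a : ℕ → ℕ := fun r => Nat.rec (motive := fun _ => ℕ) 0 (fun r b => b + G r b) r
  have ha : ∀ r, a (r + 1) = a r + G r (a r) := fun _ => rfl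
  refine ⟨a, rfl, strictMono_nat_of_lt_succ fun r => ?_, fun r => ?_, fun r => ?_⟩
  · rw [ha]
    have := hG1 r (a r)
    omega
  · rw [ha]
    exact hG2 _ _
  · rw [ha, Nat.add_sub_cancel_left]
    exact hG3 _ _

theorem exists_garlingNorm_comp_perm_ge {p : ℝ} {w : ℕ → ℝ} (hp : 0 < p) (hwpos : ∀ i, 0 < w i)
    (hw : Antitone w) (hlim : Tendsto w atTop (nhds 0)) (hdiv : ¬ Summable w) (k : ℕ) :
    ∃ f : ℕ → ℝ, ∃ π : Equiv.Perm ℕ, garlingNorm w p f ≤ ENNReal.ofReal 3 ^ (1 / p) ∧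
      (k : ℝ≥0∞) ^ (1 / p) ≤ garlingNorm w p (f ∘ π) := by
  obtain ⟨a, ha0, ha, hdouble, hfar⟩ := exists_block_endpoints hwpos hlim hdiv
  have hw0 : ∀ i, 0 ≤ w i := fun i => (hwpos i).le
  set T := a (2 * k)
  set y : ℕ → ℝ := fun j => if j < T then blockProfile w a j else 0
  have hy0 : ∀ j, 0 ≤ y j := fun j => by
    simp only [y]
    split_ifs
    exacts [blockProfile_nonneg hw0 j, le_rfl]
  have hy : Antitone y := fun i j hij => by
    simp only [y]
    split_ifs
    exacts [blockProfile_antitone hwpos ha hij, by omega, blockProfile_nonneg hw0 i, le_rfl]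
  have hyT : ∀ j < T, y j = blockProfile w a j := fun j hj => if_pos hj
  have hyp : ∀ j, |y j ^ (1 / p)| ^ p = y j := fun j => by
    rw [abs_of_nonneg (Real.rpow_nonneg (hy0 j) _), ← Real.rpow_mul (hy0 j),
      one_div_mul_cancel hp.ne', Real.rpow_one]
  set g : ℕ → ℝ := fun j => y j ^ (1 / p)
  refine ⟨g ∘ reflectBelow T, reflectBelow T, ?_, ?_⟩
  · refine garlingNorm_le_of_forall_sum_le hp.le hw0 fun φ hφ N => ?_
    simp only [Function.comp_apply, g, hyp]
    refine sum_comp_reflectBelow_le hy (fun j hj => if_neg hj.not_gt) hw0 (fun n hn => ?_) hφ N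
    rw [sum_congr rfl fun j hj => by rw [hyT j ((mem_range.1 hj).trans_le hn)]]
    exact sum_blockProfile_mul_reflect_le hwpos hw ha0 ha hfar n
  · rw [Function.comp_assoc, (reflectBelow_involutive T).comp_self, Function.comp_id]
    refine le_trans ?_ (ofReal_sum_rpow_le_garlingNorm hp.le hw0 g T)
    simp only [g, hyp]
    rw [sum_congr rfl fun j hj => by rw [hyT j (mem_range.1 hj)], ← ENNReal.ofReal_natCast]
    refine ENNReal.rpow_le_rpow (ENNReal.ofReal_le_ofReal ?_) (by positivity)
    have := le_sum_blockProfile_mul hwpos ha0 ha hdouble (2 * k)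
    push_cast at this
    linarith

theorem stmt_14_general (p : ℝ) (hp : 1 ≤ p) (w : ℕ → ℝ) (hwpos : ∀ i, 0 < w i)
    (hw : Antitone w)
    (hlim : Tendsto w atTop (nhds 0)) (hdiv : ¬ Summable w) :
    ¬ ∃ C : ℝ, ∀ f : ℕ → ℝ, garlingNorm w p f ≠ ⊤ → ∀ π : Equiv.Perm ℕ,
      garlingNorm w p (f ∘ π) ≤ ENNReal.ofReal C * garlingNorm w p f := by
  rintro ⟨C, hC⟩
  have hp0 : 0 < p := one_pos.trans_le hp
  obtain ⟨k, hk⟩ := ENNReal.exists_nat_gt (ENNReal.mul_ne_top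
    (ENNReal.rpow_ne_top_of_nonneg hp0.le ENNReal.ofReal_ne_top) ENNReal.ofReal_ne_top :
      ENNReal.ofReal C ^ p * ENNReal.ofReal 3 ≠ ⊤)
  obtain ⟨f, π, hf, hfπ⟩ := exists_garlingNorm_comp_perm_ge hp0 hwpos hw hlim hdiv k
  have hfin : garlingNorm w p f ≠ ⊤ :=
    ne_top_of_le_ne_top (ENNReal.rpow_ne_top_of_nonneg (by positivity) ENNReal.ofReal_ne_top) hf
  have hbound : (k : ℝ≥0∞) ^ (1 / p) ≤ (ENNReal.ofReal C ^ p * ENNReal.ofReal 3) ^ (1 / p) :=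
    calc (k : ℝ≥0∞) ^ (1 / p) ≤ garlingNorm w p (f ∘ π) := hfπ
      _ ≤ ENNReal.ofReal C * garlingNorm w p f := hC f hfin π
      _ ≤ ENNReal.ofReal C * ENNReal.ofReal 3 ^ (1 / p) := by gcongr
      _ = (ENNReal.ofReal C ^ p * ENNReal.ofReal 3) ^ (1 / p) := by
        rw [ENNReal.mul_rpow_of_nonneg _ _ (by positivity), ← ENNReal.rpow_mul,
          mul_one_div_cancel hp0.ne', ENNReal.rpow_one]
  exact ((ENNReal.rpow_le_rpow_iff (by positivity)).1 hbound).not_gt hk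

/-- For `w` non-increasing, positive, normalized (`w_1 = 1`), tending to `0` and
non-summable, and `1 ≤ p < ∞`, there is no finite constant `C` such that
`‖f ∘ π‖_{g(w,p)} ≤ C ‖f‖_{g(w,p)}` for all `f` of finite Garling norm and all
permutations `π`; i.e. the canonical basis of `g(w,p)` is not symmetric. -/
theorem stmt_14 (p : ℝ) (hp : 1 ≤ p) (w : ℕ → ℝ) (hwpos : ∀ i, 0 < w i)
    (hw : Antitone w) (hw1 : w 0 = 1)
    (hlim : Tendsto w atTop (nhds 0)) (hdiv : ¬ Summable w) :
    ¬ ∃ C : ℝ, ∀ f : ℕ → ℝ, garlingNorm w p f ≠ ⊤ → ∀ π : Equiv.Perm ℕ,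
      garlingNorm w p (f ∘ π) ≤ ENNReal.ofReal C * garlingNorm w p f :=
  stmt_14_general p hp w hwpos hw hlim hdiv
end

section
/- Let (w_i)_{i=1}^∞ be a non-increasing sequence of non-negative reals and define S(w) = sup over nonzero non-increasing sequences f = (a_i) of non-negative reals of (∑_{i=1}^∞ a_i w_i) / (sup_n ∑_{i=1}^n a_i w_{1+n-i}). Then S(w) < ∞ if and only if w ∈ ℓ_1 or inf_i w_i > 0. -/
/-!
If `w` is summable, then `A(a, w) ≤ a₀ ∑ w` while `B(a, w) ≥ a₀ w₀`; if `c = inf w > 0`, then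
`A(a, w) ≤ w₀ ∑ a` while `B(a, w) ≥ c ∑ a`. Either way `S(w)` is finite.

Otherwise `w` is not summable and tends to `0`. Choose breakpoints `0 = N₀ < N₁ < ⋯` such that the
block `[N_k, N_{k+1})` carries a `w`-mass `W_k ≥ 1 + ∑_{i < N_k} w_i` and is so long that
`N_k · w(N_{k+1} - N_k) ≤ 1`, and let `a = 1 / W_k` on the `k`-th block. Every block contributes `1`
to `A(a, w)`, so `A(a, w) = ∞`. In the convolution sum at `n ∈ (N_k, N_{k+1}]` the current and the
previous block contribute at most `2` each, since the mass of `w` in front of a block is at most the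
mass of the block, and all older blocks together at most `1`, since `w` has decayed there.
Hence `B(a, w) ≤ 5` and `S(w) = ∞`.
-/

open scoped NNReal ENNReal Topology
open Filter Finset

namespace ConvolutionRatio

noncomputable def pairing (a w : ℕ → ℝ≥0) : ℝ≥0∞ := ∑' i, ((a i * w i : ℝ≥0) : ℝ≥0∞)

/-- `B(a, w)`, with the indices of the paper shifted down by one. -/
noncomputable def supConv (a w : ℕ → ℝ≥0) : ℝ≥0∞ :=
  ⨆ n : ℕ, ∑ i ∈ range n, ((a i * w (n - 1 - i) : ℝ≥0) : ℝ≥0∞)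

noncomputable def ratioSup (w : ℕ → ℝ≥0) : ℝ≥0∞ :=
  ⨆ f : {a : ℕ → ℝ≥0 // Antitone a ∧ a ≠ 0}, pairing f.1 w / supConv f.1 w

variable {a w : ℕ → ℝ≥0}

lemma pairing_comm (a w : ℕ → ℝ≥0) : pairing a w = pairing w a := by
  simp only [pairing, mul_comm]

lemma pairing_le_mul_tsum (ha : Antitone a) : pairing a w ≤ a 0 * ∑' i, (w i : ℝ≥0∞) := by
  rw [← ENNReal.tsum_mul_left]
  refine ENNReal.tsum_le_tsum fun i => ?_
  rw [ENNReal.coe_mul]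
  gcongr
  exact ha (Nat.zero_le i)

lemma mul_le_supConv (a w : ℕ → ℝ≥0) : (a 0 * w 0 : ℝ≥0∞) ≤ supConv a w :=
  le_iSup_of_le 1 (by simp)

lemma iInf_mul_tsum_le_supConv (a w : ℕ → ℝ≥0) :
    ((⨅ i, w i : ℝ≥0) : ℝ≥0∞) * ∑' i, (a i : ℝ≥0∞) ≤ supConv a w := by
  rw [ENNReal.tsum_eq_iSup_nat, ENNReal.mul_iSup]
  refine iSup_mono fun n => ?_
  rw [mul_sum]
  refine sum_le_sum fun i _ => ?_
  rw [ENNReal.coe_mul, mul_comm]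
  gcongr
  exact ciInf_le (OrderBot.bddBelow _) _

lemma ratioSup_le {C : ℝ≥0∞} (h : ∀ a, Antitone a → pairing a w ≤ C * supConv a w) :
    ratioSup w ≤ C :=
  iSup_le fun f => ENNReal.div_le_of_le_mul (h f.1 f.2.1)

lemma div_le_ratioSup (ha : Antitone a) (ha0 : a ≠ 0) :
    pairing a w / supConv a w ≤ ratioSup w :=
  le_iSup (fun f : {a : ℕ → ℝ≥0 // Antitone a ∧ a ≠ 0} => pairing f.1 w / supConv f.1 w)
    ⟨a, ha, ha0⟩

lemma ratioSup_le_tsum_div (hw0 : w 0 ≠ 0) :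
    ratioSup w ≤ (∑' i, (w i : ℝ≥0∞)) / w 0 := by
  refine ratioSup_le fun a ha => ?_
  calc pairing a w ≤ a 0 * ∑' i, (w i : ℝ≥0∞) := pairing_le_mul_tsum ha
    _ = (∑' i, (w i : ℝ≥0∞)) / w 0 * (a 0 * w 0) := by
      rw [mul_comm (a 0 : ℝ≥0∞) (w 0), ← mul_assoc,
        ENNReal.div_mul_cancel (by simpa) ENNReal.coe_ne_top, mul_comm]
    _ ≤ _ := by gcongr; exact mul_le_supConv a w

lemma ratioSup_le_div_iInf (hw : Antitone w) (hc : ⨅ i, w i ≠ 0) :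
    ratioSup w ≤ w 0 / ((⨅ i, w i : ℝ≥0) : ℝ≥0∞) := by
  refine ratioSup_le fun a _ => ?_
  calc pairing a w = pairing w a := pairing_comm a w
    _ ≤ w 0 * ∑' i, (a i : ℝ≥0∞) := pairing_le_mul_tsum hw
    _ = w 0 / ((⨅ i, w i : ℝ≥0) : ℝ≥0∞) * ((⨅ i, w i : ℝ≥0) * ∑' i, (a i : ℝ≥0∞)) := by
      rw [← mul_assoc, ENNReal.div_mul_cancel (by simpa) ENNReal.coe_ne_top]
    _ ≤ _ := by gcongr; exact iInf_mul_tsum_le_supConv a w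

lemma sum_Ico_mul_le (hw : Antitone w) {p q n : ℕ} {t : ℝ≥0} (hqn : q ≤ n)
    (ha : ∀ i ∈ Ico p q, a i ≤ t) :
    ∑ i ∈ Ico p q, a i * w (n - 1 - i) ≤ t * ∑ i ∈ range q, w i :=
  calc ∑ i ∈ Ico p q, a i * w (n - 1 - i)
      ≤ ∑ i ∈ Ico p q, t * w (q - 1 - i) :=
        sum_le_sum fun i hi => mul_le_mul' (ha i hi) (hw (by omega))
    _ ≤ ∑ i ∈ range q, t * w (q - 1 - i) :=
        sum_le_sum_of_subset (by rw [range_eq_Ico]; exact Ico_subset_Ico_left (Nat.zero_le p))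
    _ = t * ∑ i ∈ range q, w i := by rw [← mul_sum, sum_range_reflect w q]

lemma sum_range_mul_le (hw : Antitone w) {p m n : ℕ} (ha : ∀ i, a i ≤ 1) (h : p + m < n) :
    ∑ i ∈ range p, a i * w (n - 1 - i) ≤ p * w m :=
  calc ∑ i ∈ range p, a i * w (n - 1 - i) ≤ ∑ _i ∈ range p, 1 * w m :=
        sum_le_sum fun i hi => mul_le_mul' (ha i) (hw (by simp only [mem_range] at hi; omega))
    _ = p * w m := by simp

section Blocks

variable (w) (N : ℕ → ℕ)

noncomputable def blockSum (k : ℕ) : ℝ≥0 := ∑ i ∈ Ico (N k) (N (k + 1)), w i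

/-- Searching up to `i` suffices because `k ≤ N k` for strictly monotone `N`. -/
def blockIndex (i : ℕ) : ℕ := Nat.findGreatest (fun k => N k ≤ i) i

noncomputable def blockSeq (i : ℕ) : ℝ≥0 := (blockSum w N (blockIndex N i))⁻¹

structure IsLacunary : Prop where
  zero : N 0 = 0
  one_add_sum_le_blockSum (k : ℕ) : 1 + ∑ i ∈ range (N k), w i ≤ blockSum w N k
  mul_le_one (k : ℕ) : (N k : ℝ≥0) * w (N (k + 1) - N k) ≤ 1

variable {w N}

lemma blockIndex_mono : Monotone (blockIndex N) := fun _ _ hij =>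
  Nat.findGreatest_mono (fun _ hk => hk.trans hij) hij

lemma blockIndex_eq_of_mem (hN : StrictMono N) {i k : ℕ} (hi : i ∈ Ico (N k) (N (k + 1))) :
    blockIndex N i = k := by
  rw [mem_Ico] at hi
  refine Nat.findGreatest_eq_iff.2 ⟨(hN.id_le k).trans hi.1, fun _ => hi.1, fun j hkj _ hj => ?_⟩
  exact (hi.2.trans_le (hN.monotone hkj)).not_ge hj

lemma mem_Ico_blockIndex (h0 : N 0 = 0) (hN : StrictMono N) (i : ℕ) :
    i ∈ Ico (N (blockIndex N i)) (N (blockIndex N i + 1)) := by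
  refine mem_Ico.2 ⟨Nat.findGreatest_spec (P := fun k => N k ≤ i) (Nat.zero_le i)
    (by rw [h0]; exact Nat.zero_le i), ?_⟩
  by_contra! h
  by_cases hk : blockIndex N i + 1 ≤ i
  · exact Nat.findGreatest_is_greatest (Nat.lt_succ_self _) hk h
  · exact hk ((hN.id_le _).trans h)

lemma blockSeq_eq_of_mem (hN : StrictMono N) {i k : ℕ} (hi : i ∈ Ico (N k) (N (k + 1))) :
    blockSeq w N i = (blockSum w N k)⁻¹ := by
  rw [blockSeq, blockIndex_eq_of_mem hN hi]

namespace IsLacunary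

variable (h : IsLacunary w N)
include h

lemma one_le_blockSum (k : ℕ) : 1 ≤ blockSum w N k :=
  le_self_add.trans (h.one_add_sum_le_blockSum k)

lemma blockSum_pos (k : ℕ) : 0 < blockSum w N k :=
  zero_lt_one.trans_le (h.one_le_blockSum k)

lemma strictMono : StrictMono N := strictMono_nat_of_lt_succ fun k => by
  by_contra! hk
  have := h.one_le_blockSum k
  rw [blockSum, Ico_eq_empty_of_le hk, sum_empty] at this
  exact absurd this (by norm_num)

lemma sum_range_add_blockSum (k : ℕ) :
    ∑ i ∈ range (N k), w i + blockSum w N k = ∑ i ∈ range (N (k + 1)), w i :=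
  sum_range_add_sum_Ico w (h.strictMono k.lt_succ_self).le

lemma blockSum_mono : Monotone (blockSum w N) := monotone_nat_of_le_succ fun k =>
  calc blockSum w N k ≤ ∑ i ∈ range (N (k + 1)), w i := by
        rw [← h.sum_range_add_blockSum]; exact le_add_self
    _ ≤ 1 + ∑ i ∈ range (N (k + 1)), w i := le_add_self
    _ ≤ blockSum w N (k + 1) := h.one_add_sum_le_blockSum (k + 1)

lemma blockSeq_antitone : Antitone (blockSeq w N) := fun _ _ hij =>
  inv_anti₀ (h.blockSum_pos _) (h.blockSum_mono (blockIndex_mono hij))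

lemma blockSeq_le_one (i : ℕ) : blockSeq w N i ≤ 1 :=
  inv_le_one_of_one_le₀ (h.one_le_blockSum _)

lemma blockSeq_ne_zero : blockSeq w N ≠ 0 := fun h0 =>
  inv_ne_zero (h.blockSum_pos _).ne' (congrFun h0 0)

lemma sum_range_blockSeq_mul (K : ℕ) : ∑ i ∈ range (N K), blockSeq w N i * w i = K := by
  induction K with
  | zero => simp [h.zero]
  | succ K ih =>
    rw [← sum_range_add_sum_Ico _ (h.strictMono K.lt_succ_self).le, ih,
      sum_congr rfl fun i hi => by rw [blockSeq_eq_of_mem h.strictMono hi], ← mul_sum,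
      ← blockSum, inv_mul_cancel₀ (h.blockSum_pos K).ne', Nat.cast_succ]

lemma pairing_blockSeq : pairing (blockSeq w N) w = ⊤ := by
  refine ENNReal.eq_top_of_forall_nnreal_le fun r => ?_
  obtain ⟨K, hK⟩ := exists_nat_ge r
  calc (r : ℝ≥0∞) ≤ ((∑ i ∈ range (N K), blockSeq w N i * w i : ℝ≥0) : ℝ≥0∞) := by
        rw [h.sum_range_blockSeq_mul]; exact_mod_cast hK
    _ = ∑ i ∈ range (N K), ((blockSeq w N i * w i : ℝ≥0) : ℝ≥0∞) := ENNReal.ofNNReal_finsetSum _ _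
    _ ≤ pairing (blockSeq w N) w := ENNReal.sum_le_tsum _

lemma inv_blockSum_mul_sum_range_le_two (k : ℕ) :
    (blockSum w N k)⁻¹ * ∑ i ∈ range (N (k + 1)), w i ≤ 2 := by
  rw [← h.sum_range_add_blockSum, inv_mul_le_iff₀ (h.blockSum_pos k), mul_two]
  exact add_le_add_left (le_add_self.trans (h.one_add_sum_le_blockSum k)) _

lemma sum_Ico_blockSeq_mul_le_two (hw : Antitone w) {k q n : ℕ} (hqn : q ≤ n)
    (hq : q ≤ N (k + 1)) : ∑ i ∈ Ico (N k) q, blockSeq w N i * w (n - 1 - i) ≤ 2 :=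
  calc ∑ i ∈ Ico (N k) q, blockSeq w N i * w (n - 1 - i)
      ≤ (blockSum w N k)⁻¹ * ∑ i ∈ range q, w i :=
        sum_Ico_mul_le hw hqn fun i hi =>
          (blockSeq_eq_of_mem h.strictMono (Ico_subset_Ico_right hq hi)).le
    _ ≤ (blockSum w N k)⁻¹ * ∑ i ∈ range (N (k + 1)), w i := by
        gcongr
    _ ≤ 2 := h.inv_blockSum_mul_sum_range_le_two k

lemma sum_range_blockSeq_mul_le_three (hw : Antitone w) {k n : ℕ} (hkn : N k < n) :
    ∑ i ∈ range (N k), blockSeq w N i * w (n - 1 - i) ≤ 3 := by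
  cases k with
  | zero => simp [h.zero]
  | succ j =>
    have hj := h.strictMono (Nat.lt_add_one j)
    have hold : ∑ i ∈ range (N j), blockSeq w N i * w (n - 1 - i) ≤ 1 :=
      (sum_range_mul_le hw h.blockSeq_le_one (by omega)).trans (h.mul_le_one j)
    rw [← sum_range_add_sum_Ico _ hj.le]
    calc _ ≤ (1 : ℝ≥0) + 2 :=
          add_le_add hold (h.sum_Ico_blockSeq_mul_le_two hw hkn.le le_rfl)
      _ = 3 := by norm_num

lemma sum_range_blockSeq_mul_le_five (hw : Antitone w) (n : ℕ) :
    ∑ i ∈ range n, blockSeq w N i * w (n - 1 - i) ≤ 5 := by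
  rcases n.eq_zero_or_pos with rfl | hn
  · simp
  obtain ⟨hkn, hnk⟩ := mem_Ico.1 (mem_Ico_blockIndex h.zero h.strictMono (n - 1))
  rw [← sum_range_add_sum_Ico _ (by omega : N (blockIndex N (n - 1)) ≤ n)]
  calc _ ≤ (3 : ℝ≥0) + 2 :=
        add_le_add (h.sum_range_blockSeq_mul_le_three hw (by omega))
          (h.sum_Ico_blockSeq_mul_le_two hw le_rfl (by omega))
    _ = 5 := by norm_num

lemma supConv_blockSeq_le (hw : Antitone w) : supConv (blockSeq w N) w ≤ 5 :=
  iSup_le fun n => by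
    rw [← ENNReal.ofNNReal_finsetSum]
    exact_mod_cast h.sum_range_blockSeq_mul_le_five hw n

lemma ratioSup_eq_top (hw : Antitone w) : ratioSup w = ⊤ := by
  refine top_le_iff.1 (le_trans ?_ (div_le_ratioSup h.blockSeq_antitone h.blockSeq_ne_zero))
  rw [h.pairing_blockSeq, ENNReal.top_div_of_ne_top
    (ne_top_of_le_ne_top (by norm_num) (h.supConv_blockSeq_le hw))]

end IsLacunary

end Blocks

lemma eventually_one_add_sum_range_le_sum_Ico (hsum : ¬ Summable w) (p : ℕ) :
    ∀ᶠ q in atTop, 1 + ∑ i ∈ range p, w i ≤ ∑ i ∈ Ico p q, w i := by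
  filter_upwards [(NNReal.not_summable_iff_tendsto_nat_atTop.1 hsum).eventually_ge_atTop
    (1 + 2 * ∑ i ∈ range p, w i), eventually_ge_atTop p] with q hq hpq
  rw [← sum_range_add_sum_Ico w hpq] at hq
  rw [← NNReal.coe_le_coe] at hq ⊢
  push_cast at hq ⊢
  linarith

lemma eventually_mul_le_one (hto : Tendsto w atTop (𝓝 0)) (p : ℕ) :
    ∀ᶠ q in atTop, (p : ℝ≥0) * w (q - p) ≤ 1 := by
  have : Tendsto (fun m => (p : ℝ≥0) * w m) atTop (𝓝 0) := by
    simpa using hto.const_mul (p : ℝ≥0)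
  exact (tendsto_sub_atTop_nat p).eventually (this.eventually_le_const one_pos)

lemma exists_isLacunary (hsum : ¬ Summable w) (hto : Tendsto w atTop (𝓝 0)) :
    ∃ N, IsLacunary w N := by
  have hnext (p : ℕ) : ∃ q, 1 + ∑ i ∈ range p, w i ≤ ∑ i ∈ Ico p q, w i ∧
      (p : ℝ≥0) * w (q - p) ≤ 1 :=
    ((eventually_one_add_sum_range_le_sum_Ico hsum p).and (eventually_mul_le_one hto p)).exists
  choose next hnext using hnext
  refine ⟨fun k => next^[k] 0, rfl, fun k => ?_, fun k => ?_⟩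
  · simpa only [blockSum, Function.iterate_succ_apply'] using (hnext _).1
  · simpa only [Function.iterate_succ_apply'] using (hnext _).2

end ConvolutionRatio

open ConvolutionRatio

/-- For a non-increasing sequence `(w_i)` of non-negative reals with `w_1 > 0`, the
supremum `S(w)` over all nonzero non-increasing non-negative sequences `(a_i)` of
`(∑_i a_i w_i) / (sup_n ∑_{i=1}^n a_i w_{1+n-i})` is finite iff `w ∈ ℓ₁` or
`inf_i w_i > 0`. -/
theorem stmt_18 (w : ℕ → ℝ≥0) (hw : Antitone w) (hw1 : 0 < w 0) :
    (⨆ f : {a : ℕ → ℝ≥0 // Antitone a ∧ a ≠ 0},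
        (∑' i : ℕ, ((f.1 i * w i : ℝ≥0) : ℝ≥0∞)) /
          (⨆ n : ℕ, ∑ i ∈ Finset.range n, ((f.1 i * w (n - 1 - i) : ℝ≥0) : ℝ≥0∞)))
      ≠ ⊤
    ↔ (∑' i : ℕ, (w i : ℝ≥0∞) ≠ ⊤ ∨ 0 < ⨅ i, w i) := by
  change ratioSup w ≠ ⊤ ↔ _
  rw [ENNReal.tsum_coe_ne_top_iff_summable]
  constructor
  · contrapose!
    rintro ⟨hsum, hinf⟩
    have hto : Tendsto w atTop (𝓝 0) := by
      simpa [nonpos_iff_eq_zero.1 hinf] using tendsto_atTop_ciInf hw (OrderBot.bddBelow _)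
    obtain ⟨N, hN⟩ := exists_isLacunary hsum hto
    exact hN.ratioSup_eq_top hw
  · rintro (hsum | hinf)
    · exact ne_top_of_le_ne_top
        (ENNReal.div_ne_top (ENNReal.tsum_coe_ne_top_iff_summable.2 hsum) (by simpa using hw1.ne'))
        (ratioSup_le_tsum_div hw1.ne')
    · exact ne_top_of_le_ne_top (ENNReal.div_ne_top ENNReal.coe_ne_top (by simpa using hinf.ne'))
        (ratioSup_le_div_iInf hw hinf.ne')
end
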